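/- arXiv:math/9408204 — 7 statements merged into one kernel-verified Lean document; each statement's English description precedes it below -/
import Mathlib

section
/- If s and t are finite strictly increasing sequences of natural numbers belonging to a barrier B, and s ◁ t (meaning there exists a finite sequence u with s an initial segment of u and t an initial segment of u with its first element removed), then lh(s) ≤ lh(t). -/
/-- `s ◁ t`: there is a finite sequence `u` with `s` an initial segment of `u`
and `t` an initial segment of `u` with its first element removed. -/
def Tri (s t : List ℕ) : Prop := ∃ u : List ℕ, s <+: u ∧ t <+: u.tail

/-- The base of a set of finite sequences: all naturals occurring in some member. -/
def base (B : Set (List ℕ)) : Set ℕ := {n | ∃ s ∈ B, n ∈ s}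

/-- `B` is a block: all members are strictly increasing, the base is infinite,
every infinite subset of the base (given by its increasing enumeration `f`)
has an initial segment in `B`, and no member is a proper initial segment of another. -/
def IsBlock (B : Set (List ℕ)) : Prop :=
  (∀ s ∈ B, s.Chain' (· < ·)) ∧
  (base B).Infinite ∧
  (∀ f : ℕ → ℕ, StrictMono f → (∀ n, f n ∈ base B) →
    ∃ k, (List.range k).map f ∈ B) ∧
  ∀ s ∈ B, ∀ t ∈ B, s <+: t → s = t

/-- `B` is a barrier: as a block, but no member's range is properly contained
in the range of another member. -/
def IsBarrier (B : Set (List ℕ)) : Prop :=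
  (∀ s ∈ B, s.Chain' (· < ·)) ∧
  (base B).Infinite ∧
  (∀ f : ℕ → ℕ, StrictMono f → (∀ n, f n ∈ base B) →
    ∃ k, (List.range k).map f ∈ B) ∧
  ∀ s ∈ B, ∀ t ∈ B, (∀ n, n ∈ s → n ∈ t) → ∀ n, n ∈ t → n ∈ s

/-- If `s, t` belong to a barrier `B` and `s ◁ t`, then `lh(s) ≤ lh(t)`. -/
theorem stmt_0 (B : Set (List ℕ)) (hB : IsBarrier B)
    (s t : List ℕ) (hs : s ∈ B) (ht : t ∈ B) (h : Tri s t) :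
    s.length ≤ t.length := by
  by_contra hlt
  push_neg at hlt
  obtain ⟨u, hsu, htu⟩ := h
  obtain ⟨v, rfl⟩ := hsu
  have hsne : s ≠ [] := by intro h; simp [h] at hlt
  have hst : s.tail <+: (s ++ v).tail := by
    rw [List.tail_append_of_ne_nil hsne]
    exact ⟨v, rfl⟩
  have hts : t <+: s.tail := by
    refine List.prefix_of_prefix_length_le htu hst ?_
    have : s.length - 1 ≥ t.length := by omega
    simpa using this
  have hmem : ∀ n, n ∈ t → n ∈ s := fun n hn =>
    List.mem_of_mem_tail (hts.subset hn)
  have hmem' : ∀ n, n ∈ s → n ∈ t := hB.2.2.2 t ht s hs hmem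
  have hss : s.Pairwise (· < ·) := List.isChain_iff_pairwise.mp (hB.1 s hs)
  have hts' : t.Pairwise (· < ·) := List.isChain_iff_pairwise.mp (hB.1 t ht)
  have hperm : s.Perm t := by
    rw [List.perm_ext_iff_of_nodup hss.nodup hts'.nodup]
    exact fun n => ⟨hmem' n, hmem n⟩
  have := hperm.length_eq
  omega
end

section
/- Every block contains a barrier: if B is a block then there exists a barrier B' with B' ⊆ B. -/
namespace NWAux

/-- sorted-subset implies sublist -/
theorem sublist_of_sorted_subset : ∀ (l₁ l₂ : List ℕ), l₁.Pairwise (·<·) → l₂.Pairwise (·<·) →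
    (∀ x ∈ l₁, x ∈ l₂) → l₁.Sublist l₂ := by
  intro l₁ l₂
  induction l₂ generalizing l₁ with
  | nil => intro _ _ h; cases l₁ with
    | nil => exact List.Sublist.refl _
    | cons a t => exact absurd (h a (by simp)) (by simp)
  | cons b l₂ ih =>
    intro h₁ h₂ hsub
    cases l₁ with
    | nil => exact List.nil_sublist _
    | cons a l₁ =>
      rcases List.pairwise_cons.mp h₁ with ⟨ha, h₁'⟩
      rcases List.pairwise_cons.mp h₂ with ⟨hb, h₂'⟩
      rcases List.mem_cons.mp (hsub a (by simp)) with rfl | hmem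
      · refine List.Sublist.cons₂ _ (ih l₁ h₁' h₂' ?_)
        intro x hx
        rcases List.mem_cons.mp (hsub x (by simp [hx])) with rfl | h
        · exact absurd hx (by intro hc; exact lt_irrefl x (ha x hc))
        · exact h
      · refine List.Sublist.cons _ (ih (a :: l₁) h₁ h₂' ?_)
        intro x hx
        rcases List.mem_cons.mp (hsub x hx) with rfl | h
        · rcases List.mem_cons.mp hx with h' | hx
          · exact h' ▸ hmem
          · have h1 := ha x hx
            have h2 := hb a hmem
            omega
        · exact h

theorem sublist_concat_cases {l r : List ℕ} {a : ℕ} (h : l.Sublist (r ++ [a])) :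
    l.Sublist r ∨ ∃ s, s.Sublist r ∧ l = s ++ [a] := by
  rw [List.sublist_append_iff] at h
  obtain ⟨x, y, rfl, hx, hy⟩ := h
  rcases List.sublist_singleton.mp hy with rfl | rfl
  · exact Or.inl (by simpa using hx)
  · exact Or.inr ⟨x, hx, rfl⟩

theorem le_foldr_max : ∀ {s : List ℕ} {m : ℕ}, m ∈ s → m ≤ s.foldr max 0 := by
  intro s
  induction s with
  | nil => simp
  | cons a t ih =>
    intro m hm
    rcases List.mem_cons.mp hm with rfl | hm
    · simp [le_max_iff]
    · simp only [List.foldr_cons, le_max_iff]; exact Or.inr (ih hm)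



def ext (s : List ℕ) (g : ℕ → ℕ) : ℕ → ℕ :=
  fun n => if h : n < s.length then s[n] else g (n - s.length)

def SubF (g f : ℕ → ℕ) : Prop := ∀ n, ∃ m, g n = f m

def Above (s : List ℕ) (g : ℕ → ℕ) : Prop := ∀ n, ∀ m ∈ s, m < g n

theorem subF_refl (f : ℕ → ℕ) : SubF f f := fun n => ⟨n, rfl⟩

theorem subF_trans {f g h : ℕ → ℕ} (h1 : SubF f g) (h2 : SubF g h) : SubF f h := by
  intro n; obtain ⟨m, hm⟩ := h1 n; obtain ⟨k, hk⟩ := h2 m; exact ⟨k, hm.trans hk⟩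

theorem ext_lt {s : List ℕ} {g : ℕ → ℕ} {n : ℕ} (h : n < s.length) : ext s g n = s[n] := by
  simp [ext, h]

theorem ext_ge {s : List ℕ} {g : ℕ → ℕ} {n : ℕ} (h : s.length ≤ n) :
    ext s g n = g (n - s.length) := by
  simp [ext, Nat.not_lt.mpr h]

theorem map_ext_self (s : List ℕ) (g : ℕ → ℕ) :
    (List.range s.length).map (ext s g) = s := by
  apply List.ext_getElem
  · simp
  · intro n h1 h2
    simp only [List.getElem_map, List.getElem_range]
    exact ext_lt (by simpa using h2)

theorem map_ext_take {s : List ℕ} {g : ℕ → ℕ} {k : ℕ} (h : k ≤ s.length) :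
    (List.range k).map (ext s g) = s.take k := by
  apply List.ext_getElem
  · simp [h]
  · intro n h1 h2
    simp only [List.getElem_map, List.getElem_range, List.getElem_take]
    exact ext_lt (by simp at h1; omega)

theorem strictMono_ext {s : List ℕ} {g : ℕ → ℕ} (hs : s.Pairwise (·<·))
    (hg : StrictMono g) (hab : Above s g) : StrictMono (ext s g) := by
  apply strictMono_nat_of_lt_succ
  intro n
  rcases lt_trichotomy (n+1) s.length with h | h | h
  · rw [ext_lt h, ext_lt (by omega)]
    exact List.pairwise_iff_getElem.mp hs n (n+1) (by omega) h (by omega)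
  · rw [ext_lt (by omega), ext_ge (by omega)]
    exact hab _ _ (List.getElem_mem _)
  · rcases Nat.lt_or_ge n s.length with h' | h'
    · rw [ext_lt h', ext_ge (by omega)]
      exact hab _ _ (List.getElem_mem _)
    · rw [ext_ge h', ext_ge (by omega)]
      exact hg (by omega)

theorem ext_snoc (s : List ℕ) (x : ℕ) (g : ℕ → ℕ) (n : ℕ) :
    ext (s ++ [x]) g n = ext s (ext [x] g) n := by
  rcases lt_trichotomy n s.length with h | h | h
  · rw [ext_lt (by simp; omega), ext_lt h]
    exact List.getElem_append_left h
  · subst h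
    rw [ext_lt (by simp), ext_ge (le_refl _)]
    simp [ext]
  · rw [ext_ge (by simp; omega), ext_ge (by omega)]
    have : s.length < n := h
    rw [ext_ge (by simp; omega)]
    congr 1
    simp
    omega

theorem ext_cons_shift (s : List ℕ) (h : ℕ → ℕ) (n : ℕ) :
    ext s h n = ext (s ++ [h 0]) (fun j => h (j+1)) n := by
  rw [ext_snoc]
  rcases Nat.lt_or_ge n s.length with h' | h'
  · rw [ext_lt h', ext_lt h']
  · rw [ext_ge h', ext_ge h']
    rcases Nat.eq_or_lt_of_le h' with h'' | h''
    · simp [ext, ← h'']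
    · rw [ext_ge (by simp; omega)]
      simp
      congr 1
      omega


end NWAux

namespace NWAux

variable (B S : Set (List ℕ))

def Accp (f : ℕ → ℕ) (s : List ℕ) : Prop :=
  ∀ g, StrictMono g → SubF g f → Above s g →
    ∀ k, (List.range k).map (ext s g) ∈ B → (List.range k).map (ext s g) ∈ S

def Rej (f : ℕ → ℕ) (s : List ℕ) : Prop :=
  ∀ g, StrictMono g → SubF g f → ¬ Accp B S g s

def Dec (f : ℕ → ℕ) (s : List ℕ) : Prop := Accp B S f s ∨ Rej B S f s

variable {B S}

theorem accp_mono {f g : ℕ → ℕ} {s : List ℕ} (hfg : SubF g f) (h : Accp B S f s) :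
    Accp B S g s := fun h' hm hsub hab => h h' hm (subF_trans hsub hfg) hab

theorem rej_mono {f g : ℕ → ℕ} {s : List ℕ} (hfg : SubF g f) (h : Rej B S f s) :
    Rej B S g s := fun h' hm hsub => h h' hm (subF_trans hsub hfg)

theorem dec_mono {f g : ℕ → ℕ} {s : List ℕ} (hfg : SubF g f) (h : Dec B S f s) :
    Dec B S g s := h.imp (accp_mono hfg) (rej_mono hfg)

/-- `Accp` transfers to `f` if every `f`-value above `s` is a `g`-value. -/
theorem accp_transfer {f g : ℕ → ℕ} {s : List ℕ}
    (hfg : ∀ x, (∃ n, x = f n) → (∀ m ∈ s, m < x) → ∃ m, x = g m)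
    (h : Accp B S g s) : Accp B S f s := by
  intro h' hm hsub hab
  exact h h' hm (fun n => hfg _ (hsub n) (hab n)) hab

theorem rej_transfer {f g : ℕ → ℕ} {s : List ℕ}
    (hfg : ∀ x, (∃ n, x = f n) → (∀ m ∈ s, m < x) → ∃ m, x = g m)
    (h : Rej B S g s) : Rej B S f s := by
  intro h' hm hsub hacc
  set c := s.foldr max 0 with hc
  have key : ∀ n, ∀ m ∈ s, m < h' (n + (c+1)) := by
    intro n m hm'
    have h1 : m ≤ c := le_foldr_max hm'
    have h2 : n + (c+1) ≤ h' (n + (c+1)) := hm.le_apply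
    omega
  refine h (fun n => h' (n + (c+1))) (hm.comp (fun a b hab => by omega)) ?_ ?_
  · intro n
    obtain ⟨m, hm'⟩ := hsub (n + (c+1))
    exact hfg _ ⟨m, hm'⟩ (key n)
  · exact accp_mono (fun n => ⟨n + (c+1), rfl⟩) hacc

theorem dec_transfer {f g : ℕ → ℕ} {s : List ℕ}
    (hfg : ∀ x, (∃ n, x = f n) → (∀ m ∈ s, m < x) → ∃ m, x = g m)
    (h : Dec B S g s) : Dec B S f s :=
  h.imp (accp_transfer hfg) (rej_transfer hfg)

theorem exists_decides (f : ℕ → ℕ) (hf : StrictMono f) (s : List ℕ) :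
    ∃ g, StrictMono g ∧ SubF g f ∧ Dec B S g s := by
  by_cases h : Rej B S f s
  · exact ⟨f, hf, subF_refl f, Or.inr h⟩
  · simp only [Rej, not_forall, not_not] at h
    obtain ⟨g, hg, hsub, hacc⟩ := h
    exact ⟨g, hg, hsub, Or.inl hacc⟩

theorem exists_decides_all (L : List (List ℕ)) :
    ∀ f : ℕ → ℕ, StrictMono f → ∃ g, StrictMono g ∧ SubF g f ∧ ∀ s ∈ L, Dec B S g s := by
  induction L with
  | nil => exact fun f hf => ⟨f, hf, subF_refl f, by simp⟩
  | cons s L ih =>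
    intro f hf
    obtain ⟨g, hg, hsub, hdec⟩ := exists_decides (B := B) (S := S) f hf s
    obtain ⟨g', hg', hsub', hdec'⟩ := ih g hg
    refine ⟨g', hg', subF_trans hsub' hsub, ?_⟩
    intro t ht
    rcases List.mem_cons.mp ht with rfl | ht
    · exact dec_mono hsub' hdec
    · exact hdec' t ht

/-- A member of `B` that is in `S` is accepted by everything. -/
theorem accp_of_mem (hB4 : ∀ s ∈ B, ∀ t ∈ B, s <+: t → s = t) {t : List ℕ}
    (htB : t ∈ B) (htS : t ∈ S) (f : ℕ → ℕ) : Accp B S f t := by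
  intro g hm hsub hab k hk
  have hself : (List.range t.length).map (ext t g) = t := map_ext_self t g
  rcases Nat.le_total k t.length with h | h
  · have hpre : ((List.range k).map (ext t g)) <+: t := by
      rw [map_ext_take h]; exact List.take_prefix _ _
    have := hB4 _ hk t htB hpre
    rw [this]; exact htS
  · have hpre : t <+: ((List.range k).map (ext t g)) := by
      conv_lhs => rw [← hself]
      refine List.IsPrefix.map _ ?_
      refine ⟨(List.range k).drop t.length, ?_⟩
      rw [show List.range t.length = (List.range k).take t.length from by
        rw [List.take_range]; congr 1; omega, List.take_append_drop]
    have := hB4 t htB _ hk hpre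
    rw [← this]; exact htS

end NWAux

namespace NWAux

variable {B S : Set (List ℕ)}

/-- tail of a strict mono function beyond a bound. -/
theorem tail_above (f : ℕ → ℕ) (hf : StrictMono f) (s : List ℕ) :
    ∃ g, StrictMono g ∧ SubF g f ∧ Above s g := by
  set c := s.foldr max 0
  refine ⟨fun n => f (n + (c+1)), hf.comp (fun a b h => by omega), fun n => ⟨n + (c+1), rfl⟩, ?_⟩
  intro n m hm
  show m < f (n + (c+1))
  have h1 : m ≤ c := le_foldr_max hm
  have h2 : n + (c+1) ≤ f (n + (c+1)) := hf.le_apply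
  omega

/-- Acceptance propagates to one-point extensions. -/
theorem accp_snoc {f : ℕ → ℕ} {s : List ℕ} {x : ℕ} (hacc : Accp B S f s)
    (hx : ∃ i, x = f i) (hxs : ∀ m ∈ s, m < x) : Accp B S f (s ++ [x]) := by
  intro g hg hsub hab
  have habx : ∀ n, x < g n := fun n => hab n x (by simp)
  set g' : ℕ → ℕ := ext [x] g with hg'
  have hg'0 : g' 0 = x := by simp [hg', ext]
  have hg'succ : ∀ n, g' (n+1) = g n := by intro n; simp [hg', ext]
  have hmono : StrictMono g' := by
    apply strictMono_nat_of_lt_succ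
    intro n
    cases n with
    | zero => rw [hg'0, hg'succ]; exact habx 0
    | succ m => rw [hg'succ, hg'succ]; exact hg (by omega)
  have hsub' : SubF g' f := by
    intro n
    cases n with
    | zero => rw [hg'0]; exact hx
    | succ m => rw [hg'succ]; exact hsub m
  have hab' : Above s g' := by
    intro n m hm
    cases n with
    | zero => rw [hg'0]; exact hxs m hm
    | succ j => rw [hg'succ]; exact hab j m (by simp [hm])
  intro k hk
  have heq : (List.range k).map (ext (s ++ [x]) g) = (List.range k).map (ext s g') := by
    apply List.map_congr_left
    intro n _
    rw [ext_snoc]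
  rw [heq] at hk ⊢
  exact hacc g' hmono hsub' hab' k hk

/-- If `D` decides everything and rejects `s`, only finitely many one-point extensions
are accepted. -/
theorem rej_bad_finite {D : ℕ → ℕ} (hD : StrictMono D) (s : List ℕ)
    (hrej : Rej B S D s) :
    {n : ℕ | Accp B S D (s ++ [D n])}.Finite := by
  by_contra hinf
  have hinf : {n : ℕ | Accp B S D (s ++ [D n])}.Infinite := hinf
  set A := {n : ℕ | Accp B S D (s ++ [D n])} with hAdef
  have hinf' : {n | n ∈ A}.Infinite := by simpa using hinf
  have hA : ∀ k, Nat.nth (· ∈ A) k ∈ A := fun k => Nat.nth_mem_of_infinite hinf' k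
  have hAm : StrictMono (Nat.nth (· ∈ A)) := Nat.nth_strictMono hinf'
  set ψ := Nat.nth (· ∈ A)
  refine hrej (fun n => D (ψ n)) (hD.comp hAm) (fun n => ⟨ψ n, rfl⟩) ?_
  -- show Accp B S (D ∘ ψ) s
  intro h hm hsub hab k hk
  rcases Nat.le_total k s.length with hks | hks
  · -- segment is a prefix of s; use acceptance of some extension
    obtain ⟨a, ha⟩ := hsub 0
    set x := h 0
    have hxA : Accp B S D (s ++ [D (ψ a)]) := hA a
    obtain ⟨g₀, hg₀m, hg₀sub, hg₀ab⟩ := tail_above D hD (s ++ [D (ψ a)])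
    have h1 : (List.range k).map (ext (s ++ [D (ψ a)]) g₀) = (List.range k).map (ext s h) := by
      rw [map_ext_take hks, map_ext_take (by simp; omega), List.take_append_of_le_length hks]
    have := hxA g₀ hg₀m hg₀sub hg₀ab k (by rw [h1]; exact hk)
    rw [← h1]; exact this
  · -- segment goes past s; its (|s|+1)-st element is h 0 = D (ψ a)
    obtain ⟨a, ha⟩ := hsub 0
    have hxA : Accp B S D (s ++ [h 0]) := by rw [ha]; exact hA a
    set h' : ℕ → ℕ := fun j => h (j+1) with hh'
    have hm' : StrictMono h' := hm.comp (fun a b hab => by omega)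
    have hsub' : SubF h' D := by
      intro n
      obtain ⟨m, hm2⟩ := hsub (n+1)
      exact ⟨ψ m, hm2⟩
    have hab' : Above (s ++ [h 0]) h' := by
      intro n m hm2
      rcases List.mem_append.mp hm2 with hm2 | hm2
      · exact lt_trans (hab 0 m hm2) (hm (by omega))
      · simp at hm2; subst hm2; exact hm (by omega)
    have heq : ∀ n, ext s h n = ext (s ++ [h 0]) h' n := fun n => ext_cons_shift s h n
    have heql : (List.range k).map (ext s h) = (List.range k).map (ext (s ++ [h 0]) h') := by
      apply List.map_congr_left; intro n _; exact heq n
    rw [heql] at hk ⊢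
    exact hxA h' hm' hsub' hab' k hk

end NWAux

namespace NWAux

variable {B S : Set (List ℕ)}

theorem sorted_le_getLast : ∀ {s : List ℕ} (h : s ≠ []) {x : ℕ}, x ∈ s → s.Pairwise (·<·) →
    x ≤ s.getLast h := by
  intro s
  induction s with
  | nil => simp
  | cons a t ih =>
    intro h x hx hpw
    rcases List.pairwise_cons.mp hpw with ⟨ha, hpw'⟩
    cases t with
    | nil => simp at hx; simp [hx]
    | cons b u =>
      rw [List.getLast_cons (by simp)]
      rcases List.mem_cons.mp hx with rfl | hx
      · exact le_of_lt (ha _ (List.getLast_mem _))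
      · exact ih (by simp) hx hpw'

theorem exists_diagonal (f₀ : ℕ → ℕ) (hf₀ : StrictMono f₀) :
    ∃ D : ℕ → ℕ, StrictMono D ∧ SubF D f₀ ∧
      ∀ s : List ℕ, s.Pairwise (·<·) → (∀ m ∈ s, ∃ i, m = D i) → Dec B S D s := by
  classical
  set DInv : (ℕ → ℕ) × List ℕ → Prop := fun p =>
    StrictMono p.1 ∧ SubF p.1 f₀ ∧ p.2.Pairwise (·<·) ∧ (∀ m ∈ p.2, m < p.1 0) ∧
      ∀ s, s.Sublist p.2 → Dec B S p.1 s with hDInv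
  have hstep : ∀ p, DInv p → ∃ q : (ℕ → ℕ) × List ℕ, DInv q ∧
      q.2 = p.2 ++ [p.1 0] ∧ SubF q.1 (fun n => p.1 (n+1)) := by
    rintro ⟨g, l⟩ ⟨hm, hsubf, hpw, hlt, _⟩
    obtain ⟨g', hg'm, hg'sub, hg'dec⟩ := exists_decides_all (B := B) (S := S)
      ((l ++ [g 0]).sublists) (fun n => g (n+1)) (hm.comp (fun a b h => by omega))
    obtain ⟨j, hj⟩ := hg'sub 0
    have hg'0 : g 0 < g' 0 := by rw [hj]; exact hm (by omega)
    refine ⟨(g', l ++ [g 0]), ⟨hg'm, ?_, ?_, ?_, ?_⟩, rfl, hg'sub⟩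
    · exact subF_trans (subF_trans hg'sub (fun n => ⟨n+1, rfl⟩)) hsubf
    · rw [List.pairwise_append]
      exact ⟨hpw, by simp, by intro a ha b hb; simp at hb; subst hb; exact hlt a ha⟩
    · intro m hm2
      rcases List.mem_append.mp hm2 with hm2 | hm2
      · exact lt_trans (hlt m hm2) hg'0
      · simp at hm2; subst hm2; exact hg'0
    · intro s hsl
      exact hg'dec s (List.mem_sublists.mpr hsl)
  obtain ⟨g₀, hg₀m, hg₀sub, hg₀dec⟩ := exists_decides (B := B) (S := S) f₀ hf₀ []
  have hp₀ : DInv (g₀, ([] : List ℕ)) := by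
    refine ⟨hg₀m, hg₀sub, by simp, by simp, ?_⟩
    intro s hsl
    rw [List.sublist_nil.mp hsl]
    exact hg₀dec
  set stepFn : (ℕ → ℕ) × List ℕ → (ℕ → ℕ) × List ℕ :=
    fun p => if h : DInv p then (hstep p h).choose else p with hstepFn
  have hspec : ∀ p, DInv p → DInv (stepFn p) ∧ (stepFn p).2 = p.2 ++ [p.1 0] ∧
      SubF (stepFn p).1 (fun n => p.1 (n+1)) := by
    intro p h
    have hh := (hstep p h).choose_spec
    simp only [hstepFn, dif_pos h]
    exact hh
  set F : ℕ → (ℕ → ℕ) × List ℕ := fun k => Nat.rec (g₀, ([] : List ℕ)) (fun _ q => stepFn q) k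
    with hFdef
  have hFs : ∀ k, F (k+1) = stepFn (F k) := fun k => rfl
  have hInv : ∀ k, DInv (F k) := by
    intro k
    induction k with
    | zero => exact hp₀
    | succ k ih => rw [hFs]; exact (hspec _ ih).1
  have hl : ∀ k, (F (k+1)).2 = (F k).2 ++ [(F k).1 0] := fun k => by
    rw [hFs]; exact (hspec _ (hInv k)).2.1
  have htail : ∀ k, SubF (F (k+1)).1 (fun n => (F k).1 (n+1)) := fun k => by
    rw [hFs]; exact (hspec _ (hInv k)).2.2
  set D : ℕ → ℕ := fun k => (F k).1 0 with hDdef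
  have hsub1 : ∀ k, SubF (F (k+1)).1 (F k).1 :=
    fun k => subF_trans (htail k) (fun n => ⟨n+1, rfl⟩)
  have hchain : ∀ k n, k ≤ n → SubF (F n).1 (F k).1 := by
    intro k n hkn
    induction n with
    | zero => have hk0 : k = 0 := by omega
              subst hk0; exact subF_refl _
    | succ n ih =>
      rcases Nat.eq_or_lt_of_le hkn with rfl | h
      · exact subF_refl _
      · exact subF_trans (hsub1 n) (ih (by omega))
  have hDmem : ∀ k n, k ≤ n → ∃ m, D n = (F k).1 m := fun k n h => hchain k n h 0
  have hDm : StrictMono D := by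
    apply strictMono_nat_of_lt_succ
    intro k
    obtain ⟨m, hm⟩ := htail k 0
    show (F k).1 0 < (F (k+1)).1 0
    rw [hm]
    exact (hInv k).1 (by omega)
  have hsubf₀ : SubF D f₀ := fun k => ((hInv k).2.1) 0
  have hlist : ∀ k, (F k).2 = (List.range k).map D := by
    intro k
    induction k with
    | zero => rfl
    | succ k ih => rw [hl, ih, List.range_succ, List.map_append]; rfl
  refine ⟨D, hDm, hsubf₀, ?_⟩
  intro s hpw hmem
  cases hs : s with
  | nil =>
    apply dec_transfer (g := (F 0).1)
    · intro x ⟨n, hn⟩ _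
      obtain ⟨m, hm⟩ := hDmem 0 n (Nat.zero_le n)
      exact ⟨m, hn.trans hm⟩
    · exact (hInv 0).2.2.2.2 [] (List.nil_sublist _)
  | cons a t =>
    subst hs
    have hne : (a :: t) ≠ [] := by simp
    obtain ⟨k, hk⟩ := hmem _ (List.getLast_mem hne)
    have hsl : (a :: t).Sublist (F (k+1)).2 := by
      rw [hlist (k+1)]
      apply sublist_of_sorted_subset _ _ hpw
      · rw [List.pairwise_map]
        exact (List.pairwise_lt_range).imp (fun h => hDm h)
      · intro x hx
        obtain ⟨i, hi⟩ := hmem x hx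
        have hle : x ≤ (a :: t).getLast hne := sorted_le_getLast hne hx hpw
        rw [hi, hk] at hle
        have : i ≤ k := hDm.le_iff_le.mp hle
        rw [List.mem_map]
        exact ⟨i, List.mem_range.mpr (by omega), hi.symm⟩
    have hdec := (hInv (k+1)).2.2.2.2 _ hsl
    apply dec_transfer (g := (F (k+1)).1) ?_ hdec
    intro x ⟨n, hn⟩ hab
    have h1 : D k < x := by rw [← hk]; exact hab _ (List.getLast_mem hne)
    have h2 : k < n := by
      rw [hn] at h1
      exact hDm.lt_iff_lt.mp h1
    obtain ⟨m, hm⟩ := hDmem (k+1) n (by omega)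
    exact ⟨m, hn.trans hm⟩

end NWAux

namespace NWAux

theorem nash_williams (B S : Set (List ℕ)) (hB : IsBlock B) :
    ∃ E : ℕ → ℕ, StrictMono E ∧ (∀ n, E n ∈ base B) ∧
      ((∀ t ∈ B, (∀ m ∈ t, ∃ n, m = E n) → t ∈ S) ∨
       (∀ t ∈ B, (∀ m ∈ t, ∃ n, m = E n) → t ∉ S)) := by
  classical
  obtain ⟨hch, hinf, hblk, hB4⟩ := hB
  have hinf' : {n | n ∈ base B}.Infinite := by simpa using hinf
  set f₀ : ℕ → ℕ := Nat.nth (· ∈ base B) with hf₀def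
  have hf₀m : StrictMono f₀ := Nat.nth_strictMono hinf'
  have hf₀mem : ∀ n, f₀ n ∈ base B := fun n => Nat.nth_mem_of_infinite hinf' n
  obtain ⟨D, hDm, hDsub, hDdec⟩ := exists_diagonal (B := B) (S := S) f₀ hf₀m
  have hDbase : ∀ n, D n ∈ base B := by
    intro n; obtain ⟨m, hm⟩ := hDsub n; rw [hm]; exact hf₀mem m
  have hdecnil : Dec B S D [] := hDdec [] (by simp) (by simp)
  rcases hdecnil with hacc | hrej
  · -- acceptance case
    refine ⟨D, hDm, hDbase, Or.inl ?_⟩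
    have haccAll : ∀ t : List ℕ, t.Pairwise (·<·) → (∀ m ∈ t, ∃ i, m = D i) →
        Accp B S D t := by
      intro t
      induction t using List.reverseRecOn with
      | nil => intro _ _; exact hacc
      | append_singleton s x ih =>
        intro hpw hmem
        rw [List.pairwise_append] at hpw
        refine accp_snoc (ih hpw.1 (fun m hm => hmem m (by simp [hm]))) ?_ ?_
        · exact hmem x (by simp)
        · intro m hm; exact hpw.2.2 m hm x (by simp)
    intro t htB htmem
    have hpw : t.Pairwise (·<·) := List.isChain_iff_pairwise.mp (hch t htB)
    obtain ⟨g, hgm, hgsub, hgab⟩ := tail_above D hDm t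
    have := haccAll t hpw htmem g hgm hgsub hgab t.length
      (by rw [map_ext_self]; exact htB)
    rwa [map_ext_self] at this
  · -- rejection case: fusion
    set Inv : List ℕ → Prop := fun l =>
      l.Pairwise (·<·) ∧ ∀ s, s.Sublist (l.map D) → Rej B S D s with hInvdef
    have hInvNil : Inv [] := by
      refine ⟨by simp, ?_⟩
      intro s hs
      simp only [List.map_nil, List.sublist_nil] at hs
      rw [hs]; exact hrej
    have hstepex : ∀ l, Inv l → ∃ n, (∀ m ∈ l, m < n) ∧ Inv (l ++ [n]) := by
      rintro l ⟨hpw, hrej'⟩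
      have hidx : {s : List ℕ | s.Sublist (l.map D)}.Finite := by
        apply Set.Finite.subset (List.finite_toSet (l.map D).sublists)
        intro s hs
        exact List.mem_sublists.mpr hs
      have h𝒜 : (⋃ s ∈ {s : List ℕ | s.Sublist (l.map D)}, {n | Accp B S D (s ++ [D n])}).Finite := by
        apply Set.Finite.biUnion hidx
        intro s hs
        exact rej_bad_finite hDm s (hrej' s hs)
      have hbig : ((⋃ s ∈ {s : List ℕ | s.Sublist (l.map D)}, {n | Accp B S D (s ++ [D n])}) ∪
          {m | m ≤ l.foldr max 0}).Finite := h𝒜.union (Set.finite_le_nat _)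
      obtain ⟨n, hn⟩ := hbig.infinite_compl.nonempty
      simp only [Set.mem_compl_iff, Set.mem_union, not_or, Set.mem_setOf_eq, not_le] at hn
      obtain ⟨hn𝒜, hnmax⟩ := hn
      have hlt : ∀ m ∈ l, m < n := fun m hm => lt_of_le_of_lt (le_foldr_max hm) hnmax
      refine ⟨n, hlt, ?_, ?_⟩
      · rw [List.pairwise_append]
        exact ⟨hpw, by simp, fun a ha b hb => by simp at hb; subst hb; exact hlt a ha⟩
      · intro s hs
        rw [List.map_append] at hs
        simp only [List.map_cons, List.map_nil] at hs
        rcases sublist_concat_cases hs with hs' | ⟨s', hs', rfl⟩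
        · exact hrej' s hs'
        · have hs'mem : ∀ m ∈ s', m ∈ l.map D := fun m hm => (hs'.subset) hm
          have hs'lt : ∀ m ∈ s', m < D n := by
            intro m hm
            obtain ⟨i, hi, rfl⟩ := List.mem_map.mp (hs'mem m hm)
            exact hDm (hlt i hi)
          have hnot : ¬ Accp B S D (s' ++ [D n]) := by
            intro hc
            exact hn𝒜 (Set.mem_biUnion hs' hc)
          have hpw' : (s' ++ [D n]).Pairwise (·<·) := by
            rw [List.pairwise_append]
            refine ⟨List.Pairwise.sublist hs' ?_, by simp, ?_⟩
            · rw [List.pairwise_map]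
              exact hpw.imp (fun h => hDm h)
            · intro a ha b hb; simp at hb; subst hb; exact hs'lt a ha
          have hmem' : ∀ m ∈ s' ++ [D n], ∃ i, m = D i := by
            intro m hm
            rcases List.mem_append.mp hm with hm | hm
            · obtain ⟨i, _, rfl⟩ := List.mem_map.mp (hs'mem m hm)
              exact ⟨i, rfl⟩
            · simp at hm; subst hm; exact ⟨n, rfl⟩
          rcases hDdec _ hpw' hmem' with hc | hc
          · exact absurd hc hnot
          · exact hc
    set nFn : List ℕ → ℕ :=
      fun l => if h : ∃ n, (∀ m ∈ l, m < n) ∧ Inv (l ++ [n]) then h.choose else 0 with hnFn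
    have hstepL : ∀ l, Inv l → (∀ m ∈ l, m < nFn l) ∧ Inv (l ++ [nFn l]) := by
      intro l h
      have hex := hstepex l h
      have hh := hex.choose_spec
      simp only [hnFn, dif_pos hex]
      exact hh
    set L : ℕ → List ℕ := fun k => Nat.rec [] (fun _ l => l ++ [nFn l]) k with hLdef
    have hLs : ∀ k, L (k+1) = L k ++ [nFn (L k)] := fun k => rfl
    have hLInv : ∀ k, Inv (L k) := by
      intro k
      induction k with
      | zero => exact hInvNil
      | succ k ih => rw [hLs]; exact (hstepL _ ih).2
    set φ : ℕ → ℕ := fun k => nFn (L k) with hφdef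
    have hLlist : ∀ k, L k = (List.range k).map φ := by
      intro k
      induction k with
      | zero => rfl
      | succ k ih => rw [hLs k, List.range_succ, List.map_append, ← ih]; rfl
    have hφm : StrictMono φ := by
      apply strictMono_nat_of_lt_succ
      intro k
      have h1 := (hstepL _ (hLInv (k+1))).1
      apply h1
      rw [hLs]
      simp [hφdef]
    set E : ℕ → ℕ := fun k => D (φ k) with hEdef
    have hEm : StrictMono E := fun a b h => hDm (hφm h)
    refine ⟨E, hEm, fun n => hDbase (φ n), Or.inr ?_⟩
    intro t htB htmem htS
    have hpw : t.Pairwise (·<·) := List.isChain_iff_pairwise.mp (hch t htB)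
    have hbound : ∀ u : List ℕ, (∀ x ∈ u, ∃ k, x = E k) →
        ∃ m, ∀ x ∈ u, ∃ k, k < m ∧ x = E k := by
      intro u
      induction u with
      | nil => exact fun _ => ⟨0, by simp⟩
      | cons a u ih =>
        intro hmem
        obtain ⟨ka, hka⟩ := hmem a (by simp)
        obtain ⟨m, hm⟩ := ih (fun x hx => hmem x (by simp [hx]))
        refine ⟨max (ka+1) m, ?_⟩
        intro x hx
        rcases List.mem_cons.mp hx with rfl | hx
        · exact ⟨ka, by omega, hka⟩
        · obtain ⟨k, hk, hk'⟩ := hm x hx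
          exact ⟨k, by omega, hk'⟩
    obtain ⟨m, hm⟩ := hbound t htmem
    have hsl : t.Sublist ((L m).map D) := by
      rw [hLlist m, List.map_map]
      apply sublist_of_sorted_subset _ _ hpw
      · rw [List.pairwise_map]
        exact (List.pairwise_lt_range).imp (fun h => hEm h)
      · intro x hx
        obtain ⟨k, hk, rfl⟩ := hm x hx
        exact List.mem_map.mpr ⟨k, List.mem_range.mpr hk, rfl⟩
    have hrejT : Rej B S D t := (hLInv m).2 t hsl
    exact hrejT D hDm (subF_refl D) (accp_of_mem hB4 htB htS D)

end NWAux


/-- Every block contains a barrier. -/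
theorem stmt_4 (B : Set (List ℕ)) (hB : IsBlock B) :
    ∃ B' : Set (List ℕ), B' ⊆ B ∧ IsBarrier B' := by
  classical
  set S : Set (List ℕ) := {s | s ∈ B ∧ ∀ t ∈ B, (∀ n ∈ t, n ∈ s) → ∀ n ∈ s, n ∈ t} with hSdef
  obtain ⟨E, hEm, hEbase, hdich⟩ := NWAux.nash_williams B S hB
  obtain ⟨hch, hinf, hblk, hB4⟩ := hB
  set B' : Set (List ℕ) := {t | t ∈ B ∧ ∀ m ∈ t, ∃ n, m = E n} with hB'def
  have hnil : ([] : List ℕ) ∉ B := by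
    intro h
    have hall : ∀ s ∈ B, s = [] := fun s hs => (hB4 [] h s hs (List.nil_prefix)).symm
    have hempty : base B = ∅ := by
      ext n
      simp only [base, Set.mem_setOf_eq, Set.mem_empty_iff_false, iff_false]
      rintro ⟨s, hs, hn⟩
      rw [hall s hs] at hn
      simp at hn
    obtain ⟨x, hx⟩ := hinf.nonempty
    rw [hempty] at hx
    exact hx
  have hB'seg : ∀ f : ℕ → ℕ, StrictMono f → (∀ n, ∃ i, f n = E i) →
      (∀ n, f n ∈ base B) → ∃ k, 0 < k ∧ (List.range k).map f ∈ B' := by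
    intro f hf hfe hfb
    obtain ⟨k, hk⟩ := hblk f hf hfb
    have hk0 : k ≠ 0 := by
      rintro rfl
      simp only [List.range_zero, List.map_nil] at hk
      exact hnil hk
    refine ⟨k, by omega, hk, ?_⟩
    intro m hm
    obtain ⟨n, _, rfl⟩ := List.mem_map.mp hm
    obtain ⟨i, hi⟩ := hfe n
    exact ⟨i, hi⟩
  have hEbase' : ∀ j, E j ∈ base B' := by
    intro j
    obtain ⟨k, hk0, hkB'⟩ := hB'seg (fun n => E (n + j))
      (hEm.comp (fun a b h => by omega)) (fun n => ⟨n + j, rfl⟩) (fun n => hEbase (n + j))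
    exact ⟨_, hkB', List.mem_map.mpr ⟨0, List.mem_range.mpr hk0, by simp⟩⟩
  rcases hdich with hgood | hbad
  · refine ⟨B', fun t ht => ht.1, ?_, ?_, ?_, ?_⟩
    · exact fun s hs => hch s hs.1
    · exact Set.infinite_of_injective_forall_mem hEm.injective hEbase'
    · intro f hf hfb
      have hfe : ∀ n, ∃ i, f n = E i := by
        intro n
        obtain ⟨s, hs, hm⟩ := hfb n
        exact hs.2 _ hm
      have hfb' : ∀ n, f n ∈ base B := by
        intro n
        obtain ⟨i, hi⟩ := hfe n
        rw [hi]; exact hEbase i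
      obtain ⟨k, _, hk⟩ := hB'seg f hf hfe hfb'
      exact ⟨k, hk⟩
    · intro s hs t ht hst
      exact (hgood t ht.1 ht.2).2 s hs.1 hst
  · exfalso
    obtain ⟨k0, hk00, ht₀⟩ := hB'seg E hEm (fun n => ⟨n, rfl⟩) hEbase
    have hP : ∃ n, ∃ t, t ∈ B' ∧ t.length = n := ⟨_, _, ht₀, rfl⟩
    obtain ⟨t, htB', htlen⟩ := Nat.find_spec hP
    have htnS : t ∉ S := hbad t htB'.1 htB'.2
    have h2 : ¬ ∀ u ∈ B, (∀ n ∈ u, n ∈ t) → ∀ n ∈ t, n ∈ u := fun hc => htnS ⟨htB'.1, hc⟩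
    push_neg at h2
    obtain ⟨u, huB, hsub, n₀, hn₀t, hn₀u⟩ := h2
    have huB' : u ∈ B' := ⟨huB, fun m hm => htB'.2 m (hsub m hm)⟩
    have hund : u.Nodup :=
      ((List.isChain_iff_pairwise.mp (hch u huB)).imp (fun h => ne_of_lt h))
    have htnd : t.Nodup :=
      ((List.isChain_iff_pairwise.mp (hch t htB'.1)).imp (fun h => ne_of_lt h))
    have hss : u.toFinset ⊂ t.toFinset := by
      constructor
      · intro m hm
        rw [List.mem_toFinset] at hm ⊢
        exact hsub m hm
      · intro hc
        exact hn₀u (List.mem_toFinset.mp (hc (List.mem_toFinset.mpr hn₀t)))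
    have hlt : u.length < t.length := by
      rw [← List.toFinset_card_of_nodup hund, ← List.toFinset_card_of_nodup htnd]
      exact Finset.card_lt_card hss
    exact Nat.find_min hP (htlen ▸ hlt) ⟨u, huB', rfl⟩
end

section
/- If B is a block (respectively barrier) and B = B₁ ∪ B₂, then there exists a block (respectively barrier) B' ⊆ B such that B' ⊆ B₁ or B' ⊆ B₂. -/
namespace NWproof
open List

/-- `glue s g` : the sequence `s` followed by the values of `g`. -/
def glue (s : List ℕ) (g : ℕ → ℕ) : ℕ → ℕ :=
  fun n => if n < s.length then s.getD n 0 else g (n - s.length)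

lemma glue_nil (g : ℕ → ℕ) : glue [] g = g := by
  funext n; simp [glue]

lemma glue_map (s : List ℕ) (g : ℕ → ℕ) :
    (List.range s.length).map (glue s g) = s := by
  apply List.ext_getElem
  · simp
  · intro i h1 h2
    simp only [List.getElem_map, List.getElem_range]
    have hi : i < s.length := by simpa using h2
    simp [glue, hi, List.getD_eq_getElem?_getD, List.getElem?_eq_getElem hi]

lemma glue_concat (s : List ℕ) (g : ℕ → ℕ) :
    glue (s ++ [g 0]) (fun n => g (n + 1)) = glue s g := by
  funext n
  simp only [glue, List.length_append, List.length_cons, List.length_nil]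
  rcases lt_trichotomy n s.length with h | h | h
  · rw [if_pos (by omega), if_pos h, List.getD_append _ _ _ _ h]
  · subst h
    rw [if_pos (by omega), if_neg (lt_irrefl _), List.getD_append_right _ _ _ _ le_rfl]
    simp
  · rw [if_neg (by omega), if_neg (by omega)]
    congr 1
    omega

lemma mem_glue (s : List ℕ) (g : ℕ → ℕ) (n : ℕ) :
    glue s g n ∈ s ∨ glue s g n ∈ Set.range g := by
  by_cases h : n < s.length
  · left
    simp only [glue, h, if_true]
    rw [List.getD_eq_getElem _ _ h]
    exact List.getElem_mem _
  · right; simp only [glue, h, if_false]; exact ⟨_, rfl⟩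

lemma le_foldr_max (s : List ℕ) : ∀ y ∈ s, y ≤ s.foldr max 0 := by
  induction s with
  | nil => simp
  | cons a t ih =>
    intro y hy
    rcases hy with _ | hy
    · simp
    · simpa using Or.inr (ih y (by assumption))

lemma chain'_lt_iff_pairwise {l : List ℕ} : l.Chain' (· < ·) ↔ l.Pairwise (· < ·) :=
  List.isChain_iff_pairwise

/-- a strictly increasing list whose members all lie in a strictly
increasing list is a sublist of it -/
lemma sorted_sublist : ∀ (l s : List ℕ), s.Pairwise (· < ·) → l.Pairwise (· < ·) →
    (∀ x ∈ s, x ∈ l) → s <+ l := by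
  intro l
  induction l with
  | nil =>
    intro s _ _ h
    have : s = [] := List.eq_nil_iff_forall_not_mem.2 (fun x hx => by simpa using h x hx)
    simp [this]
  | cons a t ih =>
    intro s hs hl hsub
    cases s with
    | nil => exact List.nil_sublist _
    | cons b s' =>
      have hbs' : ∀ x ∈ s', b < x := fun x hx => (List.pairwise_cons.1 hs).1 x hx
      have hat : ∀ x ∈ t, a < x := fun x hx => (List.pairwise_cons.1 hl).1 x hx
      by_cases hba : b = a
      · subst hba
        apply List.cons_sublist_cons.2
        apply ih s' (List.pairwise_cons.1 hs).2 (List.pairwise_cons.1 hl).2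
        intro x hx
        rcases List.mem_cons.1 (hsub x (List.mem_cons_of_mem _ hx)) with h | h
        · exact absurd (h ▸ hbs' x hx) (lt_irrefl _)
        · exact h
      · have hbt : b ∈ t := by
          rcases List.mem_cons.1 (hsub b List.mem_cons_self) with h | h
          · exact absurd h hba
          · exact h
        have hab : a < b := hat b hbt
        apply List.Sublist.cons
        apply ih _ hs (List.pairwise_cons.1 hl).2
        intro x hx
        rcases List.mem_cons.1 (hsub x hx) with h | h
        · exfalso
          rcases List.mem_cons.1 hx with rfl | hxs
          · exact hba h
          · have := hbs' x hxs
            omega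
        · exact h

lemma chain'_concat {l : List ℕ} {a : ℕ} (hl : l.Chain' (· < ·))
    (h : ∀ x ∈ l, x < a) : (l ++ [a]).Chain' (· < ·) := by
  rw [chain'_lt_iff_pairwise] at hl ⊢
  rw [List.pairwise_append]
  exact ⟨hl, List.pairwise_singleton _ _, fun x hx y hy => by
    simp at hy; subst hy; exact h x hx⟩

lemma chain'_map_of_strictMono {f : ℕ → ℕ} (hf : StrictMono f) (n : ℕ) :
    ((List.range n).map f).Chain' (· < ·) := by
  rw [chain'_lt_iff_pairwise]
  apply List.Pairwise.map
  · exact fun a b h => hf h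
  · exact List.pairwise_lt_range (n := n)

lemma list_bound {α : Type*} (Q : α → ℕ → Prop)
    (hmono : ∀ t n₀ n₁, n₀ ≤ n₁ → Q t n₀ → Q t n₁) :
    ∀ L : List α, (∀ t ∈ L, ∃ n₀, Q t n₀) → ∃ n₀, ∀ t ∈ L, Q t n₀ := by
  intro L
  induction L with
  | nil => exact fun _ => ⟨0, by simp⟩
  | cons a l ih =>
    intro h
    obtain ⟨n₁, hn₁⟩ := h a List.mem_cons_self
    obtain ⟨n₂, hn₂⟩ := ih (fun t ht => h t (List.mem_cons_of_mem _ ht))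
    refine ⟨max n₁ n₂, fun t ht => ?_⟩
    rcases List.mem_cons.1 ht with rfl | ht
    · exact hmono _ _ _ (le_max_left _ _) hn₁
    · exact hmono _ _ _ (le_max_right _ _) (hn₂ t ht)


lemma glue_strictMono {s : List ℕ} {g : ℕ → ℕ} (hs : s.Chain' (· < ·))
    (hg : StrictMono g) (h : ∀ x ∈ s, x < g 0) : StrictMono (glue s g) := by
  apply strictMono_nat_of_lt_succ
  intro n
  by_cases h1 : n + 1 < s.length
  · have h0 : n < s.length := by omega
    simp only [glue, h0, h1, if_true]
    have hc := List.isChain_iff_getElem.1 hs n (by omega)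
    rw [List.getD_eq_getElem _ _ h0, List.getD_eq_getElem _ _ h1]
    simpa using hc
  · by_cases h0 : n < s.length
    · have hn1 : n + 1 = s.length := by omega
      have h1' : ¬ n + 1 < s.length := h1
      simp only [glue, h0, h1', if_true, if_false]
      have hmem : s.getD n 0 ∈ s := by
        rw [List.getD_eq_getElem _ _ h0]
        exact List.getElem_mem _
      have : n + 1 - s.length = 0 := by omega
      rw [this]
      exact h _ hmem
    · have h0' : ¬ n < s.length := h0
      simp only [glue, h0', h1, if_false]
      exact hg (by omega)

lemma le_getLast : ∀ (l : List ℕ), l.Chain' (· < ·) → ∀ (h : l ≠ []) (x : ℕ),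
    x ∈ l → x ≤ l.getLast h := by
  intro l
  induction l with
  | nil => simp
  | cons a t ih =>
    intro hl h x hx
    cases t with
    | nil =>
      simp only [List.mem_singleton] at hx
      subst hx
      simp [List.getLast]
    | cons b t' =>
      rw [List.getLast_cons (by simp)]
      have hab := (List.isChain_cons_cons.1 hl).1
      have htl := (List.isChain_cons_cons.1 hl).2
      rcases List.mem_cons.1 hx with rfl | hx'
      · exact le_trans hab.le (ih htl (by simp) b List.mem_cons_self)
      · exact ih htl (by simp) x hx'

section Forcing

variable (B B₁ : Set (List ℕ))

/-- the colouring: some initial segment of `f` lies in `B ∩ B₁` -/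
def Col (f : ℕ → ℕ) : Prop := ∃ k, (List.range k).map f ∈ B ∧ (List.range k).map f ∈ B₁

/-- `M` accepts `s` -/
def Acc' (M : ℕ → ℕ) (s : List ℕ) : Prop :=
  ∀ g : ℕ → ℕ, StrictMono g → Set.range g ⊆ Set.range M → (∀ x ∈ s, x < g 0) →
    Col B B₁ (glue s g)

/-- `M` rejects `s` : no infinite subset of `M` accepts `s` -/
def Rej (M : ℕ → ℕ) (s : List ℕ) : Prop :=
  ∀ N : ℕ → ℕ, StrictMono N → Set.range N ⊆ Set.range M → ¬ Acc' B B₁ N s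

def Dec (M : ℕ → ℕ) (s : List ℕ) : Prop := Acc' B B₁ M s ∨ Rej B B₁ M s

variable {B B₁}

lemma Acc'_mono {M N : ℕ → ℕ} {s : List ℕ} (h : Set.range N ⊆ Set.range M)
    (ha : Acc' B B₁ M s) : Acc' B B₁ N s :=
  fun g hg hgr hok => ha g hg (hgr.trans h) hok

lemma Rej_mono {M N : ℕ → ℕ} {s : List ℕ} (h : Set.range N ⊆ Set.range M)
    (hr : Rej B B₁ M s) : Rej B B₁ N s :=
  fun P hP hPr => hr P hP (hPr.trans h)

lemma Dec_mono {M N : ℕ → ℕ} {s : List ℕ} (h : Set.range N ⊆ Set.range M)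
    (hd : Dec B B₁ M s) : Dec B B₁ N s :=
  hd.imp (Acc'_mono h) (Rej_mono h)

lemma exists_dec (M : ℕ → ℕ) (hM : StrictMono M) (s : List ℕ) :
    ∃ N, StrictMono N ∧ Set.range N ⊆ Set.range M ∧ Dec B B₁ N s := by
  by_cases h : Rej B B₁ M s
  · exact ⟨M, hM, subset_rfl, Or.inr h⟩
  · simp only [Rej, not_forall, not_not] at h
    obtain ⟨N, hN, hNr, hNa⟩ := h
    exact ⟨N, hN, hNr, Or.inl hNa⟩

lemma exists_dec_list (L : List (List ℕ)) :
    ∀ M : ℕ → ℕ, StrictMono M →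
      ∃ N, StrictMono N ∧ Set.range N ⊆ Set.range M ∧ ∀ s ∈ L, Dec B B₁ N s := by
  induction L with
  | nil => exact fun M hM => ⟨M, hM, subset_rfl, by simp⟩
  | cons a l ih =>
    intro M hM
    obtain ⟨N, hN, hNr, hNd⟩ := exists_dec M hM a (B := B) (B₁ := B₁)
    obtain ⟨P, hP, hPr, hPd⟩ := ih N hN
    refine ⟨P, hP, hPr.trans hNr, fun s hs => ?_⟩
    rcases List.mem_cons.1 hs with rfl | hs
    · exact Dec_mono hPr hNd
    · exact hPd s hs

/-- uniqueness of the `B`-initial segment, from prefix-freeness -/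
lemma uniq_seg (hpf : ∀ s ∈ B, ∀ t ∈ B, s <+: t → s = t) {f : ℕ → ℕ} {k₁ k₂ : ℕ}
    (h₁ : (List.range k₁).map f ∈ B) (h₂ : (List.range k₂).map f ∈ B) : k₁ = k₂ := by
  wlog h : k₁ ≤ k₂ generalizing k₁ k₂
  · exact (this h₂ h₁ (by omega)).symm
  have hpre : (List.range k₁).map f <+: (List.range k₂).map f := by
    apply List.IsPrefix.map
    have := List.take_prefix k₁ (List.range k₂)
    rwa [List.take_range, min_eq_left h] at this
  have := hpf _ h₁ _ h₂ hpre
  have hlen := congrArg List.length this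
  simpa using hlen

/-- if `s ∈ B` then the colour of `glue s g` is just membership of `s` in `B₁` -/
lemma col_glue (hpf : ∀ s ∈ B, ∀ t ∈ B, s <+: t → s = t) {s : List ℕ} (hs : s ∈ B)
    (g : ℕ → ℕ) : Col B B₁ (glue s g) ↔ s ∈ B₁ := by
  constructor
  · rintro ⟨k, hk, hk1⟩
    have : k = s.length := uniq_seg hpf hk (by rw [glue_map]; exact hs)
    subst this
    rwa [glue_map] at hk1
  · intro h
    exact ⟨s.length, by rw [glue_map]; exact hs, by rw [glue_map]; exact h⟩

/-- Key claim: if `M` rejects `s` and decides all one-point extensions by its own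
elements, then it rejects `s ++ [M n]` for all large enough `n`. -/
lemma key_claim {M : ℕ → ℕ} (hM : StrictMono M) {s : List ℕ}
    (hrej : Rej B B₁ M s)
    (hdec : ∀ n, (∀ x ∈ s, x < M n) → Dec B B₁ M (s ++ [M n])) :
    ∃ n₀, ∀ n, n₀ ≤ n → (∀ x ∈ s, x < M n) → Rej B B₁ M (s ++ [M n]) := by
  set I : Set ℕ := {n | (∀ x ∈ s, x < M n) ∧ Acc' B B₁ M (s ++ [M n])} with hI
  have hIfin : I.Finite := by
    by_contra hinf
    replace hinf : I.Infinite := hinf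
    have hnth := Nat.nth_strictMono (p := (· ∈ I)) hinf
    set N : ℕ → ℕ := fun i => M (Nat.nth (· ∈ I) i) with hN
    have hNs : StrictMono N := hM.comp hnth
    have hNr : Set.range N ⊆ Set.range M := by rintro _ ⟨i, rfl⟩; exact ⟨_, rfl⟩
    apply hrej N hNs hNr
    intro g hg hgr hok
    obtain ⟨i, hi⟩ := hgr ⟨0, rfl⟩
    have hmem : Nat.nth (· ∈ I) i ∈ I := Nat.nth_mem_of_infinite hinf i
    have hacc : Acc' B B₁ M (s ++ [g 0]) := by
      rw [← hi]
      exact hmem.2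
    have := hacc (fun n => g (n + 1))
      (fun a b hab => hg (by omega : a + 1 < b + 1))
      (by rintro _ ⟨j, rfl⟩; exact hNr (hgr ⟨j + 1, rfl⟩))
      ?_
    · rwa [glue_concat] at this
    · intro x hx
      rcases List.mem_append.1 hx with hx | hx
      · exact (hok x hx).trans (hg (by omega : 0 < 1))
      · simp at hx
        subst hx
        exact hg (by omega : 0 < 1)
  obtain ⟨n₀, hn₀⟩ := hIfin.bddAbove
  refine ⟨n₀ + 1, fun n hn hok => ?_⟩
  rcases hdec n hok with ha | hr
  · exfalso
    have : n ∈ I := ⟨hok, ha⟩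
    have := hn₀ this
    omega
  · exact hr

/-- transfer of decisions along almost-inclusions -/
lemma transfer {M M' : ℕ → ℕ} {s : List ℕ} (hM : StrictMono M)
    (h : ∀ x ∈ Set.range M, (∀ y ∈ s, y < x) → x ∈ Set.range M')
    (hd : Dec B B₁ M' s) : Dec B B₁ M s := by
  rcases hd with ha | hr
  · left
    intro g hg hgr hok
    refine ha g hg ?_ hok
    rintro _ ⟨j, rfl⟩
    refine h _ (hgr ⟨j, rfl⟩) (fun y hy => ?_)
    exact (hok y hy).trans_le (hg.monotone (Nat.zero_le j))
  · right
    intro N hN hNr hNa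
    set j₀ := s.foldr max 0 + 1 with hj₀def
    have hj₀ : ∀ y ∈ s, y < N j₀ := fun y hy =>
      lt_of_le_of_lt (le_foldr_max s y hy)
        (lt_of_lt_of_le (Nat.lt_succ_self _) hN.le_apply)
    refine hr (fun i => N (i + j₀)) (hN.comp (fun a b hab => by omega)) ?_ ?_
    · rintro _ ⟨i, rfl⟩
      refine h _ (hNr ⟨i + j₀, rfl⟩) (fun y hy => ?_)
      exact lt_of_lt_of_le (hj₀ y hy) (hN.monotone (by omega))
    · exact Acc'_mono (by rintro _ ⟨i, rfl⟩; exact ⟨i + j₀, rfl⟩) hNa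

/-- Fusion: a master sequence deciding all of its finite increasing subsequences. -/
lemma exists_master (hinf : (base B).Infinite) :
    ∃ M : ℕ → ℕ, StrictMono M ∧ (∀ n, M n ∈ base B) ∧
      ∀ s : List ℕ, s.Chain' (· < ·) → (∀ x ∈ s, x ∈ Set.range M) →
        Dec B B₁ M s := by
  classical
  have hA : {n | n ∈ base B}.Infinite := hinf
  set M₀ : ℕ → ℕ := Nat.nth (· ∈ base B) with hM₀def
  have hM₀ : StrictMono M₀ := Nat.nth_strictMono hA
  have hM₀m : ∀ n, M₀ n ∈ base B := fun n => Nat.nth_mem_of_infinite hA n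
  obtain ⟨N₀, hN₀s, hN₀r, hN₀d⟩ := exists_dec_list (B := B) (B₁ := B₁) [[]] M₀ hM₀
  set Inv : List ℕ × (ℕ → ℕ) → Prop := fun p =>
    StrictMono p.2 ∧ (∀ n, p.2 n ∈ base B) ∧ (∀ x ∈ p.1, x < p.2 0) ∧
      p.1.Chain' (· < ·) ∧ ∀ s ∈ p.1.sublists, Dec B B₁ p.2 s with hInvdef
  have inv0 : Inv ([], N₀) := by
    refine ⟨hN₀s, ?_, by simp, List.isChain_nil, ?_⟩
    · intro n
      obtain ⟨k, hk⟩ := hN₀r ⟨n, rfl⟩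
      show N₀ n ∈ base B
      rw [← hk]; exact hM₀m k
    · intro s hs
      simp only [List.sublists_nil, List.mem_singleton] at hs
      subst hs
      exact hN₀d [] (List.mem_singleton_self _)
  have hstep : ∀ p : {p : List ℕ × (ℕ → ℕ) // Inv p},
      ∃ q : {p : List ℕ × (ℕ → ℕ) // Inv p},
        q.1.1 = p.1.1 ++ [p.1.2 0] ∧
          ∀ y ∈ Set.range q.1.2, ∃ k, y = p.1.2 (k + 1) := by
    rintro ⟨⟨l, M⟩, hM, hMA, hlM, hlc, hld⟩
    obtain ⟨N, hNs, hNr, hNd⟩ := exists_dec_list (B := B) (B₁ := B₁)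
      ((l ++ [M 0]).sublists) (fun i => M (i + 1)) (hM.comp (fun a b hab => by omega))
    have hNM : ∀ y ∈ Set.range N, ∃ k, y = M (k + 1) := by
      rintro _ ⟨i, rfl⟩
      obtain ⟨k, hk⟩ := hNr ⟨i, rfl⟩
      exact ⟨k, hk.symm⟩
    have hN0 : M 0 < N 0 := by
      obtain ⟨k, hk⟩ := hNM (N 0) ⟨0, rfl⟩
      rw [hk]; exact hM (by omega)
    refine ⟨⟨⟨l ++ [M 0], N⟩, hNs, ?_, ?_, chain'_concat hlc hlM, hNd⟩, rfl, hNM⟩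
    · intro n
      obtain ⟨k, hk⟩ := hNM (N n) ⟨n, rfl⟩
      show N n ∈ base B
      rw [hk]; exact hMA _
    · intro x hx
      rcases List.mem_append.1 hx with hx | hx
      · exact lt_trans (hlM x hx) hN0
      · simp only [List.mem_singleton] at hx
        subst hx
        exact hN0
  choose F hF1 hF2 using hstep
  set seq : ℕ → {p : List ℕ × (ℕ → ℕ) // Inv p} := fun n => F^[n] ⟨([], N₀), inv0⟩
    with hseqdef
  have hseq : ∀ n, seq (n + 1) = F (seq n) := fun n => Function.iterate_succ_apply' F n _
  set Ms : ℕ → ℕ := fun n => (seq n).1.2 0 with hMsdef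
  have hstrict_n : ∀ n, StrictMono (seq n).1.2 := fun n => (seq n).2.1
  have hlists : ∀ n, (seq n).1.1 = (List.range n).map Ms := by
    intro n
    induction n with
    | zero => simp [hseqdef]
    | succ k ih =>
      rw [hseq, hF1, ih, List.range_succ, List.map_append]
      rfl
  have hsub1 : ∀ n, Set.range (seq (n + 1)).1.2 ⊆ Set.range (seq n).1.2 := by
    intro n y hy
    rw [hseq] at hy
    obtain ⟨k, hk⟩ := hF2 (seq n) y hy
    exact ⟨k + 1, hk.symm⟩
  have hsubNK : ∀ n k, n ≤ k → Set.range (seq k).1.2 ⊆ Set.range (seq n).1.2 := by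
    intro n k h
    induction k, h using Nat.le_induction with
    | base => exact subset_rfl
    | succ m hm ih => exact (hsub1 m).trans ih
  have hMsmem : ∀ n k, n ≤ k → Ms k ∈ Set.range (seq n).1.2 :=
    fun n k h => hsubNK n k h ⟨0, rfl⟩
  have hMs : StrictMono Ms := by
    apply strictMono_nat_of_lt_succ
    intro n
    have h0 : Ms (n + 1) ∈ Set.range (seq (n + 1)).1.2 := ⟨0, rfl⟩
    rw [hseq] at h0
    obtain ⟨k, hk⟩ := hF2 (seq n) _ h0
    calc Ms n = (seq n).1.2 0 := rfl
      _ < (seq n).1.2 (k + 1) := hstrict_n n (by omega)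
      _ = Ms (n + 1) := hk.symm
  have hMsA : ∀ n, Ms n ∈ base B := fun n => (seq n).2.2.1 0
  refine ⟨Ms, hMs, hMsA, ?_⟩
  intro s hs hsub
  by_cases hs0 : s = []
  · subst hs0
    refine transfer hMs ?_ ((seq 0).2.2.2.2.2 [] ?_)
    · rintro _ ⟨k, rfl⟩ _
      exact hMsmem 0 k (Nat.zero_le k)
    · rw [List.mem_sublists]
      exact List.nil_sublist _
  · have hm : s.getLast hs0 ∈ s := List.getLast_mem hs0
    obtain ⟨i, hi⟩ := hsub _ hm
    set n := i + 1 with hndef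
    have hle : ∀ x ∈ s, x ≤ Ms i := by
      intro x hx
      rw [hi]
      exact le_getLast s hs hs0 x hx
    have hkey : ∀ x ∈ s, x ∈ (seq n).1.1 := by
      intro x hx
      obtain ⟨j, hj⟩ := hsub x hx
      rw [hlists n]
      have hji : j ≤ i := hMs.le_iff_le.1 (by rw [hj]; exact hle x hx)
      exact List.mem_map.2 ⟨j, List.mem_range.2 (by omega), hj⟩
    have hsl : s <+ (seq n).1.1 := by
      rw [hlists n]
      exact sorted_sublist _ s (chain'_lt_iff_pairwise.1 hs)
        (chain'_lt_iff_pairwise.1 (chain'_map_of_strictMono hMs n)) (by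
          intro x hx
          have := hkey x hx
          rwa [hlists n] at this)
    refine transfer hMs ?_ ((seq n).2.2.2.2.2 s (List.mem_sublists.2 hsl))
    rintro _ ⟨k, rfl⟩ hlt
    have : Ms i < Ms k := by
      rw [hi]
      exact hlt _ hm
    exact hMsmem n k (by have := hMs.lt_iff_lt.1 this; omega)

/-- Second diagonalisation: inside a master sequence rejecting `[]`, a subsequence
all of whose finite increasing subsequences are rejected. -/
lemma exists_reject_seq {M : ℕ → ℕ} (hM : StrictMono M) (hMA : ∀ n, M n ∈ base B)
    (hdec : ∀ s : List ℕ, s.Chain' (· < ·) → (∀ x ∈ s, x ∈ Set.range M) →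
      Dec B B₁ M s)
    (hrej : Rej B B₁ M []) :
    ∃ N : ℕ → ℕ, StrictMono N ∧ (∀ n, N n ∈ base B) ∧
      Set.range N ⊆ Set.range M ∧
      ∀ s : List ℕ, s.Chain' (· < ·) → (∀ x ∈ s, x ∈ Set.range N) →
        Rej B B₁ M s := by
  classical
  set Inv2 : List ℕ → Prop := fun l =>
    l.Chain' (· < ·) ∧ (∀ x ∈ l, x ∈ Set.range M) ∧
      ∀ s ∈ l.sublists, Rej B B₁ M s with hInv2def
  have inv0 : Inv2 [] := by
    refine ⟨List.isChain_nil, by simp, ?_⟩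
    intro s hs
    simp only [List.sublists_nil, List.mem_singleton] at hs
    subst hs
    exact hrej
  have hstep : ∀ l, Inv2 l → ∃ a, (∀ x ∈ l, x < a) ∧ Inv2 (l ++ [a]) := by
    rintro l ⟨hlc, hlm, hlr⟩
    have hthr : ∀ t ∈ l.sublists, ∃ n₀, ∀ n, n₀ ≤ n →
        (∀ x ∈ t, x < M n) → Rej B B₁ M (t ++ [M n]) := by
      intro t ht
      have htsl := List.mem_sublists.1 ht
      have htc : t.Chain' (· < ·) :=
        chain'_lt_iff_pairwise.2 ((chain'_lt_iff_pairwise.1 hlc).sublist htsl)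
      have htm : ∀ x ∈ t, x ∈ Set.range M := fun x hx => hlm x (htsl.subset hx)
      apply key_claim hM (hlr t ht)
      intro n hok
      apply hdec
      · exact chain'_concat htc hok
      · intro x hx
        rcases List.mem_append.1 hx with hx | hx
        · exact htm x hx
        · simp only [List.mem_singleton] at hx
          subst hx
          exact ⟨n, rfl⟩
    obtain ⟨n₀, hn₀⟩ := list_bound
      (fun t n₀ => ∀ n, n₀ ≤ n → (∀ x ∈ t, x < M n) → Rej B B₁ M (t ++ [M n]))
      (fun t m₀ m₁ hle h n hn => h n (le_trans hle hn)) l.sublists hthr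
    set n := max n₀ (l.foldr max 0 + 1) with hndef
    have hlf : ∀ x ∈ l, x < M n := by
      intro x hx
      have h1 : x ≤ l.foldr max 0 := le_foldr_max l x hx
      have h2 : n ≤ M n := hM.le_apply
      omega
    refine ⟨M n, hlf, chain'_concat hlc hlf, ?_, ?_⟩
    · intro x hx
      rcases List.mem_append.1 hx with hx | hx
      · exact hlm x hx
      · simp only [List.mem_singleton] at hx
        subst hx
        exact ⟨n, rfl⟩
    · intro s hs
      rw [List.mem_sublists, List.sublist_append_iff] at hs
      obtain ⟨s₁, s₂, rfl, hs₁, hs₂⟩ := hs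
      have hs₂' : s₂ = [] ∨ s₂ = [M n] := by
        cases s₂ with
        | nil => exact Or.inl rfl
        | cons b t =>
          right
          have hlen := hs₂.length_le
          simp only [List.length_cons, List.length_nil] at hlen
          have ht : t = [] := List.eq_nil_of_length_eq_zero (by omega)
          subst ht
          have hb : b ∈ [M n] := hs₂.subset (List.mem_singleton_self _)
          simp only [List.mem_singleton] at hb
          rw [hb]
      rcases hs₂' with rfl | rfl
      · rw [List.append_nil]
        exact hlr s₁ (List.mem_sublists.2 hs₁)
      · apply hn₀ s₁ (List.mem_sublists.2 hs₁) n (le_max_left _ _)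
        intro x hx
        exact hlf x (hs₁.subset hx)
  have hstep' : ∀ p : {l : List ℕ // Inv2 l},
      ∃ q : {l : List ℕ // Inv2 l} × ℕ, q.1.1 = p.1 ++ [q.2] ∧ ∀ x ∈ p.1, x < q.2 := by
    rintro ⟨l, hl⟩
    obtain ⟨a, ha1, ha2⟩ := hstep l hl
    exact ⟨⟨⟨l ++ [a], ha2⟩, a⟩, rfl, ha1⟩
  choose F2 hG1 hG2 using hstep'
  set F : {l : List ℕ // Inv2 l} → {l : List ℕ // Inv2 l} := fun p => (F2 p).1
    with hFdef
  set seq : ℕ → {l : List ℕ // Inv2 l} := fun n => F^[n] ⟨[], inv0⟩ with hseqdef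
  have hseq : ∀ n, seq (n + 1) = F (seq n) := fun n => Function.iterate_succ_apply' F n _
  set N : ℕ → ℕ := fun n => (F2 (seq n)).2 with hNdef
  have hlists : ∀ n, (seq n).1 = (List.range n).map N := by
    intro n
    induction n with
    | zero => simp [hseqdef]
    | succ k ih =>
      rw [hseq, List.range_succ, List.map_append]
      show (F2 (seq k)).1.1 = _
      rw [hG1, ih]
      rfl
  have hmemsucc : ∀ n, N n ∈ (seq (n + 1)).1 := by
    intro n
    rw [hseq]
    show N n ∈ (F2 (seq n)).1.1
    rw [hG1]
    exact List.mem_append_right _ (List.mem_singleton_self _)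
  have hNmem : ∀ n, N n ∈ Set.range M := fun n =>
    (seq (n + 1)).2.2.1 _ (hmemsucc n)
  have hNs : StrictMono N := by
    apply strictMono_nat_of_lt_succ
    intro n
    exact hG2 (seq (n + 1)) _ (hmemsucc n)
  refine ⟨N, hNs, ?_, ?_, ?_⟩
  · intro n
    obtain ⟨k, hk⟩ := hNmem n
    rw [← hk]
    exact hMA k
  · rintro _ ⟨n, rfl⟩
    exact hNmem n
  · intro s hsc hsm
    set k := s.foldr max 0 + 1 with hkdef
    have hmem : ∀ x ∈ s, x ∈ (seq k).1 := by
      intro x hx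
      obtain ⟨j, hj⟩ := hsm x hx
      rw [hlists]
      have hjk : j < k := by
        have h1 : j ≤ N j := hNs.le_apply
        have h2 : x ≤ s.foldr max 0 := le_foldr_max s x hx
        omega
      exact List.mem_map.2 ⟨j, List.mem_range.2 hjk, hj⟩
    have hsl : s <+ (seq k).1 :=
      sorted_sublist _ s (chain'_lt_iff_pairwise.1 hsc)
        (chain'_lt_iff_pairwise.1 (seq k).2.1) hmem
    exact (seq k).2.2.2 s (List.mem_sublists.2 hsl)

/-- The core dichotomy. -/
lemma core (hB1 : ∀ s ∈ B, s.Chain' (· < ·)) (hinf : (base B).Infinite)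
    (hpf : ∀ s ∈ B, ∀ t ∈ B, s <+: t → s = t) :
    ∃ M : ℕ → ℕ, StrictMono M ∧ (∀ n, M n ∈ base B) ∧
      ((∀ s ∈ B, (∀ x ∈ s, x ∈ Set.range M) → s ∈ B₁) ∨
       (∀ s ∈ B, (∀ x ∈ s, x ∈ Set.range M) → s ∉ B₁)) := by
  obtain ⟨M, hM, hMA, hMdec⟩ := exists_master (B := B) (B₁ := B₁) hinf
  rcases hMdec [] List.isChain_nil (by simp) with hacc | hrej
  · refine ⟨M, hM, hMA, Or.inl ?_⟩
    intro s hsB hsm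
    have hsc := hB1 s hsB
    set j₀ := s.foldr max 0 + 1 with hj₀def
    have hj : ∀ x ∈ s, x < (fun i => M (i + j₀)) 0 := by
      intro x hx
      have h1 : x ≤ s.foldr max 0 := le_foldr_max s x hx
      have h2 : j₀ ≤ M j₀ := hM.le_apply
      show x < M (0 + j₀)
      rw [Nat.zero_add]
      omega
    have hgs : StrictMono (glue s (fun i => M (i + j₀))) :=
      glue_strictMono hsc (hM.comp (fun a b hab => by omega)) hj
    have hgr : Set.range (glue s (fun i => M (i + j₀))) ⊆ Set.range M := by
      rintro _ ⟨n, rfl⟩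
      rcases mem_glue s _ n with h | h
      · exact hsm _ h
      · obtain ⟨i, hi⟩ := h
        exact ⟨i + j₀, hi⟩
    have hcol := hacc (glue s (fun i => M (i + j₀))) hgs hgr (by simp)
    rw [glue_nil] at hcol
    exact (col_glue hpf hsB _).1 hcol
  · obtain ⟨N, hNs, hNA, hNr, hNrej⟩ := exists_reject_seq hM hMA hMdec hrej
    refine ⟨N, hNs, hNA, Or.inr ?_⟩
    intro s hsB hsm hs1
    have hsc := hB1 s hsB
    have hrej_s : Rej B B₁ M s := hNrej s hsc hsm
    set j₀ := s.foldr max 0 + 1 with hj₀def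
    refine hrej_s (fun i => N (i + j₀)) (hNs.comp (fun a b hab => by omega))
      (by rintro _ ⟨i, rfl⟩; exact hNr ⟨i + j₀, rfl⟩) ?_
    intro g hg hgr hok
    exact (col_glue hpf hsB g).2 hs1

end Forcing

lemma nil_not_mem {B : Set (List ℕ)} (hinf : (base B).Infinite)
    (hpf : ∀ s ∈ B, ∀ t ∈ B, s <+: t → s = t) : [] ∉ B := by
  intro h
  obtain ⟨n, hn⟩ := hinf.nonempty
  obtain ⟨s, hsB, hns⟩ := hn
  have := hpf [] h s hsB List.nil_prefix
  rw [← this] at hns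
  simp at hns

/-- Assembly of the homogeneous sub-block. -/
lemma assembly (B B₁ : Set (List ℕ)) (hB1 : ∀ s ∈ B, s.Chain' (· < ·))
    (hinf : (base B).Infinite)
    (hall : ∀ f : ℕ → ℕ, StrictMono f → (∀ n, f n ∈ base B) →
      ∃ k, (List.range k).map f ∈ B)
    (hpf : ∀ s ∈ B, ∀ t ∈ B, s <+: t → s = t) :
    ∃ B' : Set (List ℕ), B' ⊆ B ∧ (base B').Infinite ∧
      (∀ f : ℕ → ℕ, StrictMono f → (∀ n, f n ∈ base B') →
        ∃ k, (List.range k).map f ∈ B') ∧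
      ((∀ s ∈ B', s ∈ B₁) ∨ (∀ s ∈ B', s ∉ B₁)) := by
  obtain ⟨M, hM, hMA, hdich⟩ := core (B := B) (B₁ := B₁) hB1 hinf hpf
  set B' : Set (List ℕ) := {s | s ∈ B ∧ ∀ x ∈ s, x ∈ Set.range M} with hB'def
  have hB'B : B' ⊆ B := fun s hs => hs.1
  have hne : [] ∉ B := nil_not_mem hinf hpf
  have hsub : Set.range M ⊆ base B' := by
    rintro _ ⟨i, rfl⟩
    obtain ⟨k, hk⟩ := hall (fun j => M (j + i)) (hM.comp fun a b h => by omega)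
      (fun n => hMA _)
    have hk0 : k ≠ 0 := by
      rintro rfl
      simp only [List.range_zero, List.map_nil] at hk
      exact hne hk
    refine ⟨(List.range k).map (fun j => M (j + i)), ⟨hk, ?_⟩, ?_⟩
    · intro x hx
      obtain ⟨j, hj, rfl⟩ := List.mem_map.1 hx
      exact ⟨j + i, rfl⟩
    · refine List.mem_map.2 ⟨0, List.mem_range.2 (by omega), ?_⟩
      simp
  have hbase' : (base B').Infinite :=
    (Set.infinite_range_of_injective hM.injective).mono hsub
  have hbaseSub : base B' ⊆ Set.range M := by
    rintro n ⟨s, hs, hns⟩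
    exact hs.2 n hns
  have hbaseB : base B' ⊆ base B := by
    rintro n ⟨s, hs, hns⟩
    exact ⟨s, hs.1, hns⟩
  refine ⟨B', hB'B, hbase', ?_, ?_⟩
  · intro f hf hfm
    obtain ⟨k, hk⟩ := hall f hf (fun n => hbaseB (hfm n))
    refine ⟨k, hk, ?_⟩
    intro x hx
    obtain ⟨j, hj, rfl⟩ := List.mem_map.1 hx
    exact hbaseSub (hfm j)
  · rcases hdich with h | h
    · exact Or.inl (fun s hs => h s hs.1 hs.2)
    · exact Or.inr (fun s hs => h s hs.1 hs.2)

/-- barriers are prefix-free -/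
lemma barrier_pf (B : Set (List ℕ)) (hB1 : ∀ s ∈ B, s.Chain' (· < ·))
    (h4 : ∀ s ∈ B, ∀ t ∈ B, (∀ n, n ∈ s → n ∈ t) → ∀ n, n ∈ t → n ∈ s) :
    ∀ s ∈ B, ∀ t ∈ B, s <+: t → s = t := by
  intro s hs t ht hpre
  have hsubset : ∀ n, n ∈ s → n ∈ t := fun n hn => hpre.subset hn
  have hts := h4 s hs t ht hsubset
  have hnodup_t : t.Nodup := List.Pairwise.imp ne_of_lt
    (chain'_lt_iff_pairwise.1 (hB1 t ht))
  have hsp : t <+~ s := hnodup_t.subperm (fun n hn => hts n hn)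
  exact hpre.eq_of_length (le_antisymm hpre.length_le hsp.length_le)

end NWproof


/-- If a block (resp. barrier) `B` is partitioned as `B = B₁ ∪ B₂`, then some
block (resp. barrier) `B' ⊆ B` is contained in `B₁` or in `B₂`. -/
theorem stmt_5 (B B₁ B₂ : Set (List ℕ)) (hpart : B = B₁ ∪ B₂) :
    (IsBlock B → ∃ B' : Set (List ℕ), IsBlock B' ∧ B' ⊆ B ∧ (B' ⊆ B₁ ∨ B' ⊆ B₂)) ∧
    (IsBarrier B → ∃ B' : Set (List ℕ), IsBarrier B' ∧ B' ⊆ B ∧ (B' ⊆ B₁ ∨ B' ⊆ B₂)) := by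
  constructor
  · rintro ⟨h1, h2, h3, h4⟩
    obtain ⟨B', hB'B, hbase', hall', hdich⟩ := NWproof.assembly B B₁ h1 h2 h3 h4
    refine ⟨B', ⟨fun s hs => h1 s (hB'B hs), hbase', hall',
      fun s hs t ht hp => h4 s (hB'B hs) t (hB'B ht) hp⟩, hB'B, ?_⟩
    rcases hdich with h | h
    · exact Or.inl (fun s hs => h s hs)
    · refine Or.inr (fun s hs => ?_)
      have hsB : s ∈ B₁ ∪ B₂ := by rw [← hpart]; exact hB'B hs
      exact hsB.resolve_left (h s hs)
  · rintro ⟨h1, h2, h3, h4⟩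
    have hpf := NWproof.barrier_pf B h1 h4
    obtain ⟨B', hB'B, hbase', hall', hdich⟩ := NWproof.assembly B B₁ h1 h2 h3 hpf
    refine ⟨B', ⟨fun s hs => h1 s (hB'B hs), hbase', hall',
      fun s hs t ht hst => h4 s (hB'B hs) t (hB'B ht) hst⟩, hB'B, ?_⟩
    rcases hdich with h | h
    · exact Or.inl (fun s hs => h s hs)
    · refine Or.inr (fun s hs => ?_)
      have hsB : s ∈ B₁ ∪ B₂ := by rw [← hpart]; exact hB'B hs
      exact hsB.resolve_left (h s hs)
end

section
/- Minimal bad array / locally minimal bad array lemma: Let (Q, ⪯) be a quasi-order, <' a well-founded transitive relation on Q compatible with ⪯ (q₀ <' q₁ implies q₀ ⪯ q₁), and f : B → Q a bad Q-array. Then there exists a bad Q-array g with dom(g) a subbarrier of B, g(s) ≤' f(s) for all s ∈ dom(g), and such that no bad Q-array g' satisfies g' <' g (where g' <' g means dom(g') ⊆ dom(g), g'(s) ≤' g(s) for all s, and g'(s) <' g(s) for some s). -/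
namespace MBA

def Bres (B : Set (List ℕ)) (Y : Set ℕ) : Set (List ℕ) := {s ∈ B | ∀ n ∈ s, n ∈ Y}

lemma Bres_sub (B : Set (List ℕ)) (Y : Set ℕ) : Bres B Y ⊆ B := fun _ h => h.1

lemma Bres_mono (B : Set (List ℕ)) {Y Z : Set ℕ} (h : Y ⊆ Z) : Bres B Y ⊆ Bres B Z :=
  fun s hs => ⟨hs.1, fun n hn => h (hs.2 n hn)⟩

variable {B : Set (List ℕ)}

lemma sorted_of_mem (hB : IsBarrier B) (s : List ℕ) (hs : s ∈ B) : s.Pairwise (· < ·) :=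
  List.isChain_iff_pairwise.mp (hB.1 s hs)

lemma nil_not_mem (hB : IsBarrier B) : [] ∉ B := by
  intro h
  have h2 : ∀ t ∈ B, ∀ n, n ∈ t → n ∈ ([] : List ℕ) := by
    intro t ht
    exact hB.2.2.2 [] h t ht (by intro n hn; simp at hn)
  have : base B = ∅ := by
    ext n; simp only [Set.mem_empty_iff_false, iff_false]
    rintro ⟨s, hsB, hns⟩
    simpa using h2 s hsB n hns
  exact hB.2.1 (by rw [this]; exact Set.finite_empty)

/-- extend a sorted list inside an infinite set to a strictly monotone enumeration -/
lemma ext_enum (Y : Set ℕ) (hY : Y.Infinite) (s : List ℕ) (hs : s.Pairwise (· < ·))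
    (hsY : ∀ n ∈ s, n ∈ Y) :
    ∃ φ : ℕ → ℕ, StrictMono φ ∧ (∀ n, φ n ∈ Y) ∧
      ∀ i (h : i < s.length), φ i = s.get ⟨i, h⟩ := by
  classical
  set Y' : Set ℕ := {x ∈ Y | ∀ y ∈ s, y < x} with hY'def
  have hY'inf : Y'.Infinite := by
    have : Y \ {x | ∃ y ∈ s, x ≤ y} ⊆ Y' := by
      rintro x ⟨hx, hx2⟩
      refine ⟨hx, fun y hy => ?_⟩
      by_contra hlt
      exact hx2 ⟨y, hy, Nat.le_of_not_lt hlt⟩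
    refine Set.Infinite.mono this (Set.Infinite.diff hY ?_)
    have : {x | ∃ y ∈ s, x ≤ y} ⊆ ⋃ y ∈ s, Set.Iic y := by
      rintro x ⟨y, hy, hxy⟩; exact Set.mem_biUnion hy hxy
    exact Set.Finite.subset (Set.Finite.biUnion (s.finite_toSet) (fun y _ => Set.finite_Iic y)) this
  have hY'p : (setOf (fun x => x ∈ Y')).Infinite := hY'inf
  refine ⟨fun n => if h : n < s.length then s.get ⟨n, h⟩ else Nat.nth (· ∈ Y') (n - s.length),
    ?_, ?_, ?_⟩
  · intro a b hab
    by_cases ha : a < s.length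
    · by_cases hb : b < s.length
      · simp only [dif_pos ha, dif_pos hb]
        exact List.pairwise_iff_get.mp hs ⟨a, ha⟩ ⟨b, hb⟩ hab
      · simp only [dif_pos ha, dif_neg hb]
        have hmem : Nat.nth (· ∈ Y') (b - s.length) ∈ Y' := Nat.nth_mem_of_infinite hY'p _
        exact hmem.2 _ (s.get_mem _)
    · have hb : ¬ b < s.length := fun hb => ha (lt_trans hab hb)
      simp only [dif_neg ha, dif_neg hb]
      exact Nat.nth_strictMono hY'p (by omega)
  · intro n
    by_cases h : n < s.length
    · simp only [dif_pos h]; exact hsY _ (s.get_mem _)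
    · simp only [dif_neg h]; exact (Nat.nth_mem_of_infinite hY'p _).1
  · intro i h; simp [h]

lemma map_range_eq_take (φ : ℕ → ℕ) (s : List ℕ) (hφ : ∀ i (h : i < s.length), φ i = s.get ⟨i, h⟩)
    (k : ℕ) (hk : k ≤ s.length) : (List.range k).map φ = s.take k := by
  apply List.ext_get
  · simp [hk]
  · intro i h1 h2
    simp only [List.get_eq_getElem] at *
    have hik : i < k := by simpa using h1
    have his : i < s.length := lt_of_lt_of_le hik hk
    rw [List.getElem_map, List.getElem_range, List.getElem_take]
    exact (by simpa using hφ i his)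

lemma mem_eq_of_prefix (hB : IsBarrier B) {s t : List ℕ} (hsB : s ∈ B) (htB : t ∈ B) (h : s <+: t) : s = t := by
  have hsub : ∀ n, n ∈ s → n ∈ t := fun n hn => h.subset hn
  have hsub2 : ∀ n, n ∈ t → n ∈ s := hB.2.2.2 s hsB t htB hsub
  obtain ⟨r, hr⟩ := h
  rcases r with _ | ⟨x, r'⟩
  · simpa using hr
  · exfalso
    have hxt : x ∈ t := by rw [← hr]; simp
    have hxs : x ∈ s := hsub2 x hxt
    have hts : t.Pairwise (· < ·) := sorted_of_mem hB t htB
    rw [← hr] at hts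
    have := (List.pairwise_append.mp hts).2.2 x hxs x (by simp)
    omega

/-- any member of B all of whose entries lie in an infinite Y ⊆ base B ... plus:
    for s sorted inside Y there is a member of B comparable with s -/
lemma exists_member (hB : IsBarrier B) (Y : Set ℕ) (hYb : Y ⊆ base B) (hY : Y.Infinite) (s : List ℕ)
    (hs : s.Pairwise (· < ·)) (hsY : ∀ n ∈ s, n ∈ Y) :
    ∃ t ∈ B, (∀ n ∈ t, n ∈ Y) ∧ (s <+: t ∨ t <+: s) := by
  obtain ⟨φ, hmono, hφY, hφs⟩ := ext_enum Y hY s hs hsY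
  obtain ⟨k, hk⟩ := hB.2.2.1 φ hmono (fun n => hYb (hφY n))
  refine ⟨(List.range k).map φ, hk, ?_, ?_⟩
  · intro n hn
    simp only [List.mem_map, List.mem_range] at hn
    obtain ⟨i, _, rfl⟩ := hn; exact hφY i
  · by_cases hks : k ≤ s.length
    · right
      rw [map_range_eq_take φ s hφs k hks]
      exact List.take_prefix k s
    · left
      have : s = ((List.range k).map φ).take s.length := by
        have h1 : (List.range s.length).map φ = s.take s.length :=
          map_range_eq_take φ s hφs s.length le_rfl
        simp only [List.take_length] at h1
        rw [← h1]
        apply List.ext_get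
        · simp; omega
        · intro i hi1 hi2
          simp only [List.get_eq_getElem, List.getElem_map, List.getElem_range, List.getElem_take]
      rw [this]
      exact List.take_prefix _ _

lemma barrier_char {C : Set (List ℕ)} (hB : IsBarrier B) (hCB : C ⊆ B) (hC : IsBarrier C) :
    C = Bres B (base C) := by
  apply Set.eq_of_subset_of_subset
  · intro s hs
    exact ⟨hCB hs, fun n hn => ⟨s, hs, hn⟩⟩
  · rintro s ⟨hsB, hsY⟩
    have hs : s.Pairwise (· < ·) := sorted_of_mem hB s hsB
    obtain ⟨t, htC, _, hcomp⟩ := exists_member hC (base C) (fun x hx => hx) hC.2.1 s hs hsY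
    rcases hcomp with h | h
    · rwa [mem_eq_of_prefix hB hsB (hCB htC) h]
    · rwa [← mem_eq_of_prefix hB (hCB htC) hsB h]

lemma restrict_barrier (hB : IsBarrier B) (Y : Set ℕ) (hYb : Y ⊆ base B) (hY : Y.Infinite) :
    IsBarrier (Bres B Y) := by
  have hbase : Y ⊆ base (Bres B Y) := by
    intro y hy
    obtain ⟨t, htB, htY, hcomp⟩ := exists_member hB Y hYb hY [y] (by simp) (by simpa using hy)
    refine ⟨t, ⟨htB, htY⟩, ?_⟩
    rcases hcomp with h | h
    · exact h.subset (by simp)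
    · rcases t with _ | ⟨a, t'⟩
      · exact absurd htB (nil_not_mem hB)
      · obtain ⟨r, hr⟩ := h
        have : a = y := by
          have := congrArg (fun l => l.head?) hr
          simpa using this
        simp [this]
  have hbase' : base (Bres B Y) = Y := by
    apply Set.eq_of_subset_of_subset _ hbase
    rintro n ⟨s, hs, hns⟩
    exact hs.2 n hns
  refine ⟨fun s hs => hB.1 s hs.1, ?_, ?_, ?_⟩
  · rw [hbase']; exact hY
  · intro φ hmono hφ
    rw [hbase'] at hφ
    obtain ⟨k, hk⟩ := hB.2.2.1 φ hmono (fun n => hYb (hφ n))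
    refine ⟨k, hk, ?_⟩
    intro n hn
    simp only [List.mem_map, List.mem_range] at hn
    obtain ⟨i, _, rfl⟩ := hn; exact hφ i
  · intro s hs t ht
    exact hB.2.2.2 s hs.1 t ht.1

lemma tri_self_singleton (m : ℕ) : Tri [m] [m] :=
  ⟨[m, m], ⟨[m], rfl⟩, List.prefix_refl _⟩

/-- key structural lemma about Tri for sorted lists of length ≥ 2 -/
lemma tri_elems {s t : List ℕ} (hs : s.Pairwise (· < ·)) (ht : t.Pairwise (· < ·))
    (hlen : 2 ≤ s.length) (htri : Tri s t) :
    ∀ x ∈ t, x ∈ s ∨ ∀ y ∈ s, y < x := by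
  obtain ⟨u, ⟨v, hv⟩, htu⟩ := htri
  rcases s with _ | ⟨s0, s'⟩
  · simp at hlen
  have hs'len : 1 ≤ s'.length := by simpa using hlen
  have hu : u.tail = s' ++ v := by rw [← hv]; rfl
  rw [hu] at htu
  have hpre : s' <+: (s' ++ v) := ⟨v, rfl⟩
  rcases List.prefix_or_prefix_of_prefix htu hpre with h | h
  · -- t <+: s'
    intro x hx
    exact Or.inl (List.mem_cons_of_mem _ (h.subset hx))
  · -- s' <+: t
    obtain ⟨w, hw⟩ := h
    intro x hx
    rw [← hw] at hx
    rcases List.mem_append.mp hx with h1 | h1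
    · exact Or.inl (List.mem_cons_of_mem _ h1)
    · right
      rw [← hw] at ht
      have hlt : ∀ a ∈ s', a < x := fun a ha => (List.pairwise_append.mp ht).2.2 a ha x h1
      intro y hy
      rcases List.mem_cons.mp hy with rfl | hy'
      · -- y = s0 < head of s' < x... s0 < every elt of s'
        rcases s' with _ | ⟨s1, s''⟩
        · simp at hs'len
        · have h01 : y < s1 := by
            have := List.pairwise_cons.mp hs
            exact this.1 s1 (by simp)
          exact lt_trans h01 (hlt s1 (by simp))
      · exact hlt y hy'

section Main

variable {Q : Type} [Preorder Q] (lt' : Q → Q → Prop)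

def le' (a b : Q) : Prop := lt' a b ∨ a = b

variable (B : Set (List ℕ)) (f : List ℕ → Q)

def IsBadOn (C : Set (List ℕ)) (g : List ℕ → Q) : Prop :=
  ∀ s ∈ C, ∀ t ∈ C, Tri s t → ¬ g s ≤ g t

variable {lt' B f}
variable (htrans : Transitive lt') (hcompat : ∀ a b : Q, lt' a b → a ≤ b)
  (hB : IsBarrier B) (hbad : IsBadOn B f)

lemma le'_refl (a : Q) : le' lt' a a := Or.inr rfl

lemma le'_trans (htrans : Transitive lt') {a b c : Q} (h1 : le' lt' a b) (h2 : le' lt' b c) :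
    le' lt' a c := by
  rcases h1 with h1 | rfl
  · rcases h2 with h2 | rfl
    · exact Or.inl (htrans h1 h2)
    · exact Or.inl h1
  · exact h2

lemma le'_le (hcompat : ∀ a b : Q, lt' a b → a ≤ b) {a b : Q} (h : le' lt' a b) : a ≤ b := by
  rcases h with h | rfl
  · exact hcompat _ _ h
  · exact le_refl a

lemma no_singleton (hbad : IsBadOn B f) (m : ℕ) : [m] ∉ B := by
  intro h
  exact hbad [m] h [m] h (tri_self_singleton m) (le_refl _)

lemma two_le_len (hB : IsBarrier B) (hbad : IsBadOn B f) {s : List ℕ} (hs : s ∈ B) :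
    2 ≤ s.length := by
  rcases s with _ | ⟨a, s'⟩
  · exact absurd hs (nil_not_mem hB)
  · rcases s' with _ | ⟨b, s''⟩
    · exact absurd hs (no_singleton hbad a)
    · simp

end Main

section Machine

variable {Q : Type} [Preorder Q]

structure St (Q : Type) where
  Z : Set ℕ
  F : Set ℕ
  g : List ℕ → Q
  pend : List (List ℕ)
  proc : Set (List ℕ)
  m : ℕ

variable (lt' : Q → Q → Prop) (B : Set (List ℕ))

structure Inv (S : St Q) : Prop where
  hZb : S.Z ⊆ base B
  hZinf : S.Z.Infinite
  hFfin : S.F.Finite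
  hFZ : S.F ⊆ S.Z
  hFinit : ∀ x ∈ S.Z, x ∉ S.F → ∀ y ∈ S.F, y < x
  hbadg : IsBadOn (Bres B S.Z) S.g
  hcover : ∀ q ∈ B, (∀ x ∈ q, x ∈ S.F) → q ∈ S.proc ∨ q ∈ S.pend
  hproc : ∀ p ∈ S.proc, p ∈ B ∧ ∀ x ∈ p, x ∈ S.F
  hpend : ∀ p ∈ S.pend, p ∈ B ∧ (∀ x ∈ p, x ∈ S.F) ∧ S.m ∈ p
  hlow : ∀ x ∈ S.Z, x < S.m → x ∈ S.F
  hFm : ∀ y ∈ S.F, y ≤ S.m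

def PoolMem (S : St Q) (p : List ℕ) (W : Set ℕ) (k : List ℕ → Q) : Prop :=
  W ⊆ S.Z ∧ W.Infinite ∧ (∀ x ∈ p, x ∈ W) ∧ IsBadOn (Bres B W) k ∧
  (∀ s ∈ Bres B W, le' lt' (k s) (S.g s)) ∧
  (∀ t ∈ S.proc, (∀ x ∈ t, x ∈ W) → k t = S.g t)

open Classical in
noncomputable def mixg (S : St Q) (W : Set ℕ) (k : List ℕ → Q) : List ℕ → Q :=
  fun s => if (∀ x ∈ s, x ∈ W) ∧ ¬(∀ x ∈ s, x < S.m) then k s else S.g s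

def StepRel (S S' : St Q) : Prop :=
  (S.pend = [] ∧ ∃ L : List (List ℕ),
      (∀ q, q ∈ L ↔ q ∈ B ∧ (∀ x ∈ q, x ∈ S.F ∪ {sInf (S.Z \ S.F)}) ∧ sInf (S.Z \ S.F) ∈ q) ∧
      S' = ⟨S.Z, S.F ∪ {sInf (S.Z \ S.F)}, S.g, L, S.proc, sInf (S.Z \ S.F)⟩) ∨
  (∃ p rest W k, S.pend = p :: rest ∧ PoolMem lt' B S p W k ∧
      (∀ W' k', PoolMem lt' B S p W' k' → ¬ lt' (k' p) (k p)) ∧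
      S' = ⟨(S.Z ∩ {x | x < S.m}) ∪ (W ∩ {x | S.m ≤ x}), S.F,
            mixg S W k, rest, insert p S.proc, S.m⟩)

end Machine

section StepEx

variable {Q : Type} [Preorder Q] {lt' : Q → Q → Prop} {B : Set (List ℕ)} {f : List ℕ → Q}

lemma finite_supported (hB : IsBarrier B) (F : Set ℕ) (hF : F.Finite) :
    {q : List ℕ | q ∈ B ∧ ∀ x ∈ q, x ∈ F}.Finite := by
  classical
  haveI : IsAntisymm ℕ (· < ·) := ⟨fun a b h1 h2 => absurd (lt_trans h1 h2) (lt_irrefl a)⟩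
  apply Set.Finite.of_finite_image (f := fun q : List ℕ => q.toFinset)
  · apply Set.Finite.subset (hF.toFinset.powerset.finite_toSet)
    rintro X ⟨q, ⟨hqB, hqF⟩, rfl⟩
    simp only [Finset.coe_powerset, Set.mem_preimage, Set.mem_powerset_iff, Finset.coe_subset,
      Finset.subset_iff, List.mem_toFinset]
    intro x hx
    rw [Set.Finite.mem_toFinset]
    exact hqF x hx
  · intro q1 h1 q2 h2 heq
    have hs1 := sorted_of_mem hB q1 h1.1
    have hs2 := sorted_of_mem hB q2 h2.1
    exact List.Perm.eq_of_pairwise (fun a _ _ _ h1 h2 => absurd (lt_trans h1 h2) (lt_irrefl a)) hs1 hs2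
      (List.perm_of_nodup_nodup_toFinset_eq hs1.nodup hs2.nodup heq)

lemma step_ex (hwf : WellFounded lt') (htrans : Transitive lt')
    (hcompat : ∀ a b : Q, lt' a b → a ≤ b)
    (hB : IsBarrier B) (hbad : IsBadOn B f)
    (S : St Q) (hS : Inv B S) : ∃ S', Inv B S' ∧ StepRel lt' B S S' := by
  classical
  rcases hpe : S.pend with _ | ⟨p, rest⟩
  · -- creation step
    have hne : (S.Z \ S.F).Nonempty := (hS.hZinf.diff hS.hFfin).nonempty
    set m' := sInf (S.Z \ S.F) with hm'
    have hm'mem : m' ∈ S.Z \ S.F := Nat.sInf_mem hne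
    have hPfin : {q : List ℕ | q ∈ B ∧ (∀ x ∈ q, x ∈ S.F ∪ {m'}) ∧ m' ∈ q}.Finite := by
      apply Set.Finite.subset (finite_supported hB (S.F ∪ {m'}) (hS.hFfin.union (Set.finite_singleton _)))
      rintro q ⟨h1, h2, _⟩; exact ⟨h1, h2⟩
    set L := hPfin.toFinset.toList with hL
    have hLmem : ∀ q, q ∈ L ↔ q ∈ B ∧ (∀ x ∈ q, x ∈ S.F ∪ {m'}) ∧ m' ∈ q := by
      intro q; rw [hL, Finset.mem_toList, Set.Finite.mem_toFinset]; rfl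
    refine ⟨⟨S.Z, S.F ∪ {m'}, S.g, L, S.proc, m'⟩, ?_, Or.inl ⟨hpe, L, hLmem, rfl⟩⟩
    have hFm'new : ∀ y ∈ S.F, y < m' := fun y hy => hS.hFinit m' hm'mem.1 hm'mem.2 y hy
    refine ⟨hS.hZb, hS.hZinf, hS.hFfin.union (Set.finite_singleton _), ?_, ?_, hS.hbadg,
      ?_, ?_, ?_, ?_, ?_⟩
    · rintro y (hy | hy)
      · exact hS.hFZ hy
      · rw [Set.mem_singleton_iff] at hy; subst hy; exact hm'mem.1
    · rintro x hx hxF y (hy | hy)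
      · exact hS.hFinit x hx (fun h => hxF (Or.inl h)) y hy
      · rw [Set.mem_singleton_iff] at hy; subst hy
        have hxZF : x ∈ S.Z \ S.F := ⟨hx, fun h => hxF (Or.inl h)⟩
        have h1 : m' ≤ x := Nat.sInf_le hxZF
        have hne' : x ≠ m' := fun h => hxF (Or.inr (by rw [h]; rfl))
        exact lt_of_le_of_ne h1 (Ne.symm hne')
    · intro q hq hsup
      by_cases hm'q : m' ∈ q
      · exact Or.inr ((hLmem q).mpr ⟨hq, hsup, hm'q⟩)
      · have : ∀ x ∈ q, x ∈ S.F := by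
          intro x hx
          rcases hsup x hx with h | h
          · exact h
          · rw [Set.mem_singleton_iff] at h; exact absurd (h ▸ hx) hm'q
        rcases hS.hcover q hq this with h | h
        · exact Or.inl h
        · rw [hpe] at h; simp at h
    · intro q hq
      obtain ⟨h1, h2⟩ := hS.hproc q hq
      exact ⟨h1, fun x hx => Or.inl (h2 x hx)⟩
    · intro q hq
      obtain ⟨h1, h2, h3⟩ := (hLmem q).mp hq
      exact ⟨h1, h2, h3⟩
    · intro x hx hxm
      by_contra hxF
      have hxF' : x ∉ S.F := fun h => hxF (Or.inl h)
      have hle : m' ≤ x := Nat.sInf_le ⟨hx, hxF'⟩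
      exact absurd (lt_of_le_of_lt hle hxm) (lt_irrefl m')
    · rintro y (hy | hy)
      · exact le_of_lt (hFm'new y hy)
      · rw [Set.mem_singleton_iff] at hy; subst hy; exact le_rfl
  · -- processing step
    have hpB : p ∈ B ∧ (∀ x ∈ p, x ∈ S.F) ∧ S.m ∈ p := hS.hpend p (by rw [hpe]; simp)
    have hpool0 : PoolMem lt' B S p S.Z S.g :=
      ⟨le_refl _, hS.hZinf, fun x hx => hS.hFZ (hpB.2.1 x hx), hS.hbadg,
        fun s _ => le'_refl _, fun t _ _ => rfl⟩
    set Vals : Set Q := {q | ∃ W k, PoolMem lt' B S p W k ∧ k p = q} with hVals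
    have hVne : Vals.Nonempty := ⟨S.g p, S.Z, S.g, hpool0, rfl⟩
    obtain ⟨W, k, hpool, hkp⟩ : ∃ W k, PoolMem lt' B S p W k ∧ k p = hwf.min Vals hVne :=
      hwf.min_mem Vals hVne
    have hmin : ∀ W' k', PoolMem lt' B S p W' k' → ¬ lt' (k' p) (k p) := by
      intro W' k' hp' hlt
      rw [hkp] at hlt
      exact hwf.not_lt_min Vals ⟨W', k', hp', rfl⟩ hlt
    have hpW : ∀ x ∈ p, x ∈ W := hpool.2.2.1
    have hmW : S.m ∈ W := hpW _ hpB.2.2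
    set Z' : Set ℕ := (S.Z ∩ {x | x < S.m}) ∪ (W ∩ {x | S.m ≤ x}) with hZ'
    have hZ'Z : Z' ⊆ S.Z := by
      rintro x (⟨h1, _⟩ | ⟨h1, _⟩)
      · exact h1
      · exact hpool.1 h1
    have hBres' : Bres B Z' ⊆ Bres B S.Z := Bres_mono B hZ'Z
    refine ⟨⟨Z', S.F, mixg S W k, rest, insert p S.proc, S.m⟩, ?_,
      Or.inr ⟨p, rest, W, k, hpe, hpool, hmin, rfl⟩⟩
    have hmix : ∀ s, ((∀ x ∈ s, x ∈ W) ∧ ¬(∀ x ∈ s, x < S.m) → mixg S W k s = k s) ∧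
        (¬((∀ x ∈ s, x ∈ W) ∧ ¬(∀ x ∈ s, x < S.m)) → mixg S W k s = S.g s) := by
      intro s
      constructor
      · intro h; simp only [mixg, if_pos h]
      · intro h; simp only [mixg, if_neg h]
    -- the key badness lemma for the mixture
    have hbadmix : IsBadOn (Bres B Z') (mixg S W k) := by
      intro s hs t ht htri
      have hsB := hs.1
      have htB := ht.1
      have hsorted_s := sorted_of_mem hB s hsB
      have hsorted_t := sorted_of_mem hB t htB
      have hslen := two_le_len hB hbad hsB
      by_cases hcs : (∀ x ∈ s, x ∈ W) ∧ ¬(∀ x ∈ s, x < S.m)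
      · rw [(hmix s).1 hcs]
        -- all elements of t are in W
        obtain ⟨y₀, hy₀s, hy₀m⟩ : ∃ y₀ ∈ s, ¬ y₀ < S.m := by
          by_contra h; push_neg at h; exact hcs.2 (fun x hx => h x hx)
        have htW : ∀ x ∈ t, x ∈ W := by
          intro x hx
          rcases tri_elems hsorted_s hsorted_t hslen htri x hx with h | h
          · exact hcs.1 x h
          · have hxZ' : x ∈ Z' := ht.2 x hx
            rcases hxZ' with ⟨_, h2⟩ | ⟨h1, _⟩
            · exact absurd h2 (by simp only [Set.mem_setOf_eq]; have := h y₀ hy₀s; omega)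
            · exact h1
        have hsW : s ∈ Bres B W := ⟨hsB, hcs.1⟩
        have htWm : t ∈ Bres B W := ⟨htB, htW⟩
        by_cases hct : (∀ x ∈ t, x ∈ W) ∧ ¬(∀ x ∈ t, x < S.m)
        · rw [(hmix t).1 hct]
          exact hpool.2.2.2.1 s hsW t htWm htri
        · rw [(hmix t).2 hct]
          -- t is low: all elements < m, hence t ∈ proc and k t = g t
          have htlow : ∀ x ∈ t, x < S.m := by
            by_contra h
            exact hct ⟨htW, fun h2 => (by exact absurd ⟨htW, h⟩ hct : False)⟩
          have htF : ∀ x ∈ t, x ∈ S.F := by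
            intro x hx
            exact hS.hlow x (hpool.1 (htW x hx)) (htlow x hx)
          have htproc : t ∈ S.proc := by
            rcases hS.hcover t htB htF with h | h
            · exact h
            · exfalso
              have := (hS.hpend t h).2.2
              have := htlow S.m this
              omega
          have := hpool.2.2.2.2.2 t htproc htW
          rw [← this]
          exact hpool.2.2.2.1 s hsW t htWm htri
      · rw [(hmix s).2 hcs]
        have hbadZ := hS.hbadg s (hBres' hs) t (hBres' ht) htri
        by_cases hct : (∀ x ∈ t, x ∈ W) ∧ ¬(∀ x ∈ t, x < S.m)
        · rw [(hmix t).1 hct]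
          intro hle
          have htWm : t ∈ Bres B W := ⟨htB, hct.1⟩
          have : k t ≤ S.g t := le'_le hcompat (hpool.2.2.2.2.1 t htWm)
          exact hbadZ (le_trans hle this)
        · rw [(hmix t).2 hct]
          exact hbadZ
    refine ⟨fun x hx => hS.hZb (hZ'Z hx), ?_, hS.hFfin, ?_, ?_, hbadmix, ?_, ?_, ?_, ?_, hS.hFm⟩
    · -- Z' infinite
      apply Set.Infinite.mono (Set.subset_union_right)
      have : W \ {x | x < S.m} ⊆ W ∩ {x | S.m ≤ x} := by
        rintro x ⟨h1, h2⟩; exact ⟨h1, by simpa using h2⟩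
      exact Set.Infinite.mono this (hpool.2.1.diff (Set.finite_Iio S.m))
    · -- F ⊆ Z'
      intro y hy
      by_cases hym : y = S.m
      · subst hym; exact Or.inr ⟨hmW, by simp⟩
      · have : y < S.m := lt_of_le_of_ne (hS.hFm y hy) hym
        exact Or.inl ⟨hS.hFZ hy, this⟩
    · -- hFinit
      intro x hx hxF y hy
      rcases hx with ⟨h1, h2⟩ | ⟨h1, h2⟩
      · exact absurd (hS.hlow x h1 h2) hxF
      · simp only [Set.mem_setOf_eq] at h2
        have hxm : x ≠ S.m := by
          intro h; apply hxF; rw [h]; exact hpB.2.1 _ hpB.2.2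
        have := hS.hFm y hy
        omega
    · -- hcover
      intro q hq hsup
      rcases hS.hcover q hq hsup with h | h
      · exact Or.inl (Set.mem_insert_of_mem _ h)
      · rw [hpe] at h
        rcases List.mem_cons.mp h with rfl | h
        · exact Or.inl (Set.mem_insert _ _)
        · exact Or.inr h
    · -- hproc
      intro q hq
      rcases Set.mem_insert_iff.mp hq with rfl | h
      · exact ⟨hpB.1, hpB.2.1⟩
      · exact hS.hproc q h
    · -- hpend
      intro q hq
      exact hS.hpend q (by rw [hpe]; exact List.mem_cons_of_mem _ hq)
    · -- hlow
      intro x hx hxm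
      rcases hx with ⟨h1, _⟩ | ⟨_, h2⟩
      · exact hS.hlow x h1 hxm
      · simp only [Set.mem_setOf_eq] at h2; exact absurd hxm (not_lt.mpr h2)

end StepEx

section Mono

variable {Q : Type} [Preorder Q] {lt' : Q → Q → Prop} {B : Set (List ℕ)} {S S' : St Q}

lemma step_Z (h : StepRel lt' B S S') : S'.Z ⊆ S.Z := by
  rcases h with ⟨_, L, _, rfl⟩ | ⟨p, rest, W, k, hpe, hpool, _, rfl⟩
  · exact le_refl _
  · rintro x (⟨h1, _⟩ | ⟨h1, _⟩)
    · exact h1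
    · exact hpool.1 h1

lemma step_F (h : StepRel lt' B S S') : S.F ⊆ S'.F := by
  rcases h with ⟨_, L, _, rfl⟩ | ⟨p, rest, W, k, hpe, hpool, _, rfl⟩
  · exact Set.subset_union_left
  · exact le_refl _

lemma step_proc (h : StepRel lt' B S S') : S.proc ⊆ S'.proc := by
  rcases h with ⟨_, L, _, rfl⟩ | ⟨p, rest, W, k, hpe, hpool, _, rfl⟩
  · exact le_refl _
  · exact Set.subset_insert _ _

lemma step_g (h : StepRel lt' B S S') : ∀ s ∈ B, le' lt' (S'.g s) (S.g s) := by
  rcases h with ⟨_, L, _, rfl⟩ | ⟨p, rest, W, k, hpe, hpool, _, rfl⟩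
  · exact fun s _ => le'_refl _
  · intro s hsB
    dsimp only [mixg]
    split
    · next hc => exact hpool.2.2.2.2.1 s ⟨hsB, hc.1⟩
    · exact le'_refl _

lemma step_gproc (h : StepRel lt' B S S') : ∀ p ∈ S.proc, S'.g p = S.g p := by
  rcases h with ⟨_, L, _, rfl⟩ | ⟨p₀, rest, W, k, hpe, hpool, _, rfl⟩
  · exact fun p _ => rfl
  · intro p hp
    dsimp only [mixg]
    split
    · next hc => exact hpool.2.2.2.2.2 p hp hc.1
    · rfl

end Mono

end MBA

open MBA in
/-- Locally minimal bad array lemma. -/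
theorem stmt_9 {Q : Type} [Preorder Q] (lt' : Q → Q → Prop)
    (hwf : WellFounded lt') (htrans : Transitive lt')
    (hcompat : ∀ a b : Q, lt' a b → a ≤ b)
    (B : Set (List ℕ)) (hB : IsBarrier B) (f : List ℕ → Q)
    (hbad : ∀ s ∈ B, ∀ t ∈ B, Tri s t → ¬ f s ≤ f t) :
    ∃ (Y : Set ℕ) (B' : Set (List ℕ)) (g : List ℕ → Q),
      Y ⊆ base B ∧ Y.Infinite ∧ B' = {s ∈ B | ∀ n ∈ s, n ∈ Y} ∧
      IsBarrier B' ∧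
      (∀ s ∈ B', ∀ t ∈ B', Tri s t → ¬ g s ≤ g t) ∧
      (∀ s ∈ B', lt' (g s) (f s) ∨ g s = f s) ∧
      ¬ ∃ (B'' : Set (List ℕ)) (g' : List ℕ → Q),
          B'' ⊆ B' ∧ IsBarrier B'' ∧
          (∀ s ∈ B'', ∀ t ∈ B'', Tri s t → ¬ g' s ≤ g' t) ∧
          (∀ s ∈ B'', lt' (g' s) (g s) ∨ g' s = g s) ∧
          (∃ s ∈ B'', lt' (g' s) (g s)) := by 
  classical
  have hbad' : IsBadOn B f := hbad
  -- initial state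
  set S₀ : St Q := ⟨base B, ∅, f, [], ∅, 0⟩ with hS₀
  have inv₀ : Inv B S₀ := by
    refine ⟨le_refl _, hB.2.1, Set.finite_empty, Set.empty_subset _, ?_, ?_, ?_, ?_, ?_, ?_, ?_⟩
    · intro x _ _ y hy; exact absurd hy (Set.notMem_empty y)
    · exact fun s hs t ht htri => hbad s hs.1 t ht.1 htri
    · intro q hq hsup
      exfalso
      have h2 := two_le_len hB hbad' hq
      rcases q with _ | ⟨a, q'⟩
      · simp at h2
      · exact absurd (hsup a (by simp)) (Set.notMem_empty a)
    · intro p hp; exact absurd hp (Set.notMem_empty p)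
    · intro p hp; cases hp
    · intro x _ hx; exact absurd hx (Nat.not_lt_zero x)
    · intro y hy; exact absurd hy (Set.notMem_empty y)
  -- the fusion sequence
  have hstep : ∀ x : {S : St Q // Inv B S}, ∃ y : {S : St Q // Inv B S},
      StepRel lt' B x.1 y.1 := by
    rintro ⟨S, hS⟩
    obtain ⟨S', h1, h2⟩ := step_ex hwf htrans hcompat hB hbad' S hS
    exact ⟨⟨S', h1⟩, h2⟩
  choose nxt hnxt using hstep
  set sq : ℕ → {S : St Q // Inv B S} := fun n => nxt^[n] ⟨S₀, inv₀⟩ with hsqdef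
  have hsq : ∀ n, StepRel lt' B (sq n).1 (sq (n + 1)).1 := by
    intro n
    have : sq (n + 1) = nxt (sq n) := by
      rw [hsqdef]; exact Function.iterate_succ_apply' nxt n _
    rw [this]; exact hnxt _
  have hsq0 : sq 0 = ⟨S₀, inv₀⟩ := rfl
  -- monotonicity facts
  have hZmono : ∀ n N, n ≤ N → (sq N).1.Z ⊆ (sq n).1.Z := by
    intro n N h
    induction N, h using Nat.le_induction with
    | base => exact le_refl _
    | succ N hnN ih => exact Set.Subset.trans (step_Z (hsq N)) ih
  have hFmono : ∀ n N, n ≤ N → (sq n).1.F ⊆ (sq N).1.F := by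
    intro n N h
    induction N, h using Nat.le_induction with
    | base => exact le_refl _
    | succ N hnN ih => exact Set.Subset.trans ih (step_F (hsq N))
  have hprocmono : ∀ n N, n ≤ N → (sq n).1.proc ⊆ (sq N).1.proc := by
    intro n N h
    induction N, h using Nat.le_induction with
    | base => exact le_refl _
    | succ N hnN ih => exact Set.Subset.trans ih (step_proc (hsq N))
  have hgproc : ∀ n N, n ≤ N → ∀ p ∈ (sq n).1.proc, (sq N).1.g p = (sq n).1.g p := by
    intro n N h
    induction N, h using Nat.le_induction with
    | base => exact fun p _ => rfl
    | succ N hnN ih =>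
      intro p hp
      rw [step_gproc (hsq N) p (hprocmono n N hnN hp)]
      exact ih p hp
  have hgchain : ∀ n N, n ≤ N → ∀ s ∈ B, le' lt' ((sq N).1.g s) ((sq n).1.g s) := by
    intro n N h
    induction N, h using Nat.le_induction with
    | base => exact fun s _ => le'_refl _
    | succ N hnN ih =>
      intro s hs
      exact le'_trans htrans (step_g (hsq N) s hs) (ih s hs)
  -- eventually a creation step
  have hcre : ∀ n, ∃ N, n ≤ N ∧ (sq N).1.pend = [] := by
    have key : ∀ L n, (sq n).1.pend.length ≤ L → ∃ N, n ≤ N ∧ (sq N).1.pend = [] := by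
      intro L
      induction L with
      | zero =>
        intro n hn
        exact ⟨n, le_rfl, List.length_eq_zero_iff.mp (Nat.le_zero.mp hn)⟩
      | succ L ih =>
        intro n hn
        rcases hp : (sq n).1.pend with _ | ⟨p, rest⟩
        · exact ⟨n, le_rfl, hp⟩
        · rcases hsq n with ⟨hpe, _, _, _⟩ | ⟨p', rest', W, k, hpe, _, _, hEq⟩
          · rw [hpe] at hp; simp at hp
          · have hlen : (sq (n + 1)).1.pend.length ≤ L := by
              rw [hEq]
              rw [hpe] at hp
              injection hp with h1 h2
              rw [hpe] at hn
              simp at hn ⊢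
              omega
            obtain ⟨N, h1, h2⟩ := ih (n + 1) hlen
            exact ⟨N, by omega, h2⟩
    intro n
    exact key (sq n).1.pend.length n le_rfl
  -- the limit base
  set Yinf : Set ℕ := ⋃ n, (sq n).1.F with hYinf
  have hYZ : ∀ n, Yinf ⊆ (sq n).1.Z := by
    intro n x hx
    obtain ⟨N, hN⟩ : ∃ N, x ∈ (sq N).1.F := by
      simpa [hYinf] using hx
    rcases le_total N n with h | h
    · exact (sq n).2.hFZ (hFmono N n h hN)
    · exact hZmono n N h ((sq N).2.hFZ hN)
  have hYb : Yinf ⊆ base B := fun x hx => (sq 0).2.hZb (hYZ 0 hx)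
  -- Yinf is infinite
  have hYinfinite : Yinf.Infinite := by
    choose cf hcf1 hcf2 using hcre
    set cr : ℕ → ℕ := fun j => Nat.rec (cf 0) (fun _ prev => cf (prev + 1)) j with hcr
    have hcr0 : cr 0 = cf 0 := rfl
    have hcrS : ∀ j, cr (j + 1) = cf (cr j + 1) := fun j => rfl
    set vals : ℕ → ℕ := fun j => sInf ((sq (cr j)).1.Z \ (sq (cr j)).1.F) with hvals
    have hvmem : ∀ j, vals j ∈ (sq (cr j)).1.Z \ (sq (cr j)).1.F := by
      intro j
      exact Nat.sInf_mem (((sq (cr j)).2.hZinf.diff (sq (cr j)).2.hFfin).nonempty)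
    have hcrp : ∀ j, (sq (cr j)).1.pend = [] := by
      intro j
      cases j with
      | zero => exact hcf2 0
      | succ i => exact hcf2 (cr i + 1)
    have hvF : ∀ j, vals j ∈ (sq (cr j + 1)).1.F := by
      intro j
      rcases hsq (cr j) with ⟨hpe, L, hL, hEq⟩ | ⟨p', rest', W, k, hpe, _, _, _⟩
      · rw [hEq]; exact Or.inr rfl
      · rw [hcrp j] at hpe; simp at hpe
    have hvY : ∀ j, vals j ∈ Yinf := fun j => Set.mem_iUnion.mpr ⟨cr j + 1, hvF j⟩
    have hmono : ∀ j, vals j < vals (j + 1) := by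
      intro j
      have h1 : vals j ∈ (sq (cr (j + 1))).1.F := by
        apply hFmono (cr j + 1) (cr (j + 1)) _ (hvF j)
        rw [hcrS j]; exact hcf1 _
      have h2 := hvmem (j + 1)
      exact (sq (cr (j + 1))).2.hFinit _ h2.1 h2.2 _ h1
    apply Set.infinite_of_injective_forall_mem
      (f := fun j => vals j) _ hvY
    exact (strictMono_nat_of_lt_succ hmono).injective
  -- positions in the pending queue are eventually processed
  have hpendproc : ∀ n p, p ∈ (sq n).1.pend → ∃ N, p ∈ (sq N).1.proc := by
    have key : ∀ L n p, (sq n).1.pend.length ≤ L → p ∈ (sq n).1.pend →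
        ∃ N, p ∈ (sq N).1.proc := by
      intro L
      induction L with
      | zero =>
        intro n p hlen hp
        rw [List.length_eq_zero_iff.mp (Nat.le_zero.mp hlen)] at hp
        simp at hp
      | succ L ih =>
        intro n p hlen hp
        rcases hsq n with ⟨hpe, _, _, _⟩ | ⟨p', rest', W, k, hpe, _, _, hEq⟩
        · rw [hpe] at hp; simp at hp
        · by_cases hpp : p = p'
          · refine ⟨n + 1, ?_⟩
            rw [hEq, hpp]
            exact Set.mem_insert _ _
          · have hprest : p ∈ rest' := by
              rw [hpe] at hp
              rcases List.mem_cons.mp hp with h | h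
              · exact absurd h hpp
              · exact h
            have hlen' : (sq (n + 1)).1.pend.length ≤ L := by
              rw [hEq]
              rw [hpe] at hlen
              simp at hlen ⊢
              omega
            exact ih (n + 1) p hlen' (by rw [hEq]; exact hprest)
    intro n p hp
    exact key (sq n).1.pend.length n p le_rfl hp
  -- every position supported in Yinf is eventually processed
  have hsupall : ∀ l : List ℕ, (∀ x ∈ l, x ∈ Yinf) → ∃ n, ∀ x ∈ l, x ∈ (sq n).1.F := by
    intro l
    induction l with
    | nil => exact fun _ => ⟨0, by simp⟩
    | cons a l ih =>
      intro hY
      obtain ⟨n1, hn1⟩ := ih (fun x hx => hY x (List.mem_cons_of_mem _ hx))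
      obtain ⟨n2, hn2⟩ : ∃ n, a ∈ (sq n).1.F := by
        have := hY a (by simp)
        simpa [hYinf] using this
      refine ⟨max n1 n2, ?_⟩
      intro x hx
      rcases List.mem_cons.mp hx with rfl | hx
      · exact hFmono n2 _ (le_max_right _ _) hn2
      · exact hFmono n1 _ (le_max_left _ _) (hn1 x hx)
  have hevent : ∀ p ∈ B, (∀ x ∈ p, x ∈ Yinf) → ∃ N, p ∈ (sq N).1.proc := by
    intro p hpB hpY
    obtain ⟨n, hn⟩ := hsupall p hpY
    rcases (sq n).2.hcover p hpB hn with h | h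
    · exact ⟨n, h⟩
    · exact hpendproc n p h
  -- the limit array
  set gi : List ℕ → Q := fun p =>
    if h : ∃ N, p ∈ (sq N).1.proc then (sq (Nat.find h)).1.g p else f p with hgidef
  have hgi : ∀ p N, p ∈ (sq N).1.proc → gi p = (sq N).1.g p := by
    intro p N hN
    have hex : ∃ N, p ∈ (sq N).1.proc := ⟨N, hN⟩
    have h1 : gi p = (sq (Nat.find hex)).1.g p := by
      rw [hgidef]; exact dif_pos hex
    rw [h1]
    exact (hgproc (Nat.find hex) N (Nat.find_le hN) p (Nat.find_spec hex)).symm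
  have hgile : ∀ p ∈ B, (∀ x ∈ p, x ∈ Yinf) → ∀ n, le' lt' (gi p) ((sq n).1.g p) := by
    intro p hpB hpY n
    obtain ⟨N, hN⟩ := hevent p hpB hpY
    have hN' : p ∈ (sq (max n N)).1.proc := hprocmono N _ (le_max_right _ _) hN
    rw [hgi p _ hN']
    exact hgchain n _ (le_max_left _ _) p hpB
  refine ⟨Yinf, Bres B Yinf, gi, hYb, hYinfinite, rfl,
    restrict_barrier hB Yinf hYb hYinfinite, ?_, ?_, ?_⟩
  · -- badness of the limit array
    intro s hs t ht htri
    obtain ⟨Ns, hNs⟩ := hevent s hs.1 hs.2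
    obtain ⟨Nt, hNt⟩ := hevent t ht.1 ht.2
    set N := max Ns Nt with hN
    rw [hgi s N (hprocmono Ns N (le_max_left _ _) hNs),
        hgi t N (hprocmono Nt N (le_max_right _ _) hNt)]
    exact (sq N).2.hbadg s ⟨hs.1, fun x hx => hYZ N (hs.2 x hx)⟩
      t ⟨ht.1, fun x hx => hYZ N (ht.2 x hx)⟩ htri
  · -- below f
    intro s hs
    exact hgile s hs.1 hs.2 0
  · -- local minimality
    rintro ⟨B'', g', hsub, hbar'', hbad'', hle'', s₁, hs₁, hlt₁⟩
    set W : Set ℕ := base B'' with hW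
    have hWY : W ⊆ Yinf := by
      rintro x ⟨s, hsB'', hxs⟩
      exact (hsub hsB'').2 x hxs
    have hWinf : W.Infinite := hbar''.2.1
    have hchar : B'' = Bres B W :=
      barrier_char hB (fun s hs => (hsub hs).1) hbar''
    set D : Set (List ℕ) := {s | s ∈ B'' ∧ lt' (g' s) (gi s)} with hD
    have hDmem : ∀ s ∈ D, ∃ N, s ∈ (sq N).1.proc := by
      rintro s ⟨hsB'', _⟩
      exact hevent s (hsub hsB'').1 (hsub hsB'').2
    have hPex : ∃ n, ∃ s ∈ D, s ∈ (sq n).1.proc := by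
      obtain ⟨N, hN⟩ := hDmem s₁ ⟨hs₁, hlt₁⟩
      exact ⟨N, s₁, ⟨hs₁, hlt₁⟩, hN⟩
    obtain ⟨sm, hsmD, hsmproc⟩ := Nat.find_spec hPex
    have hN₁min : ∀ n < Nat.find hPex, ¬ ∃ s ∈ D, s ∈ (sq n).1.proc :=
      fun n hn => Nat.find_min hPex hn
    have hN₁pos : Nat.find hPex ≠ 0 := by
      intro h
      rw [h] at hsmproc
      exact absurd hsmproc (Set.notMem_empty sm)
    obtain ⟨n₁, hn₁⟩ : ∃ n₁, Nat.find hPex = n₁ + 1 := ⟨Nat.find hPex - 1, by omega⟩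
    rw [hn₁] at hsmproc
    have hn₁lt : n₁ < Nat.find hPex := by omega
    have hsmnot : sm ∉ (sq n₁).1.proc := by
      intro h
      exact hN₁min n₁ hn₁lt ⟨sm, hsmD, h⟩
    -- the step at n₁ must be a processing step with head sm
    rcases hsq n₁ with ⟨hpe, L, hL, hEq⟩ | ⟨p, rest, Wp, k, hpe, hpool, hmin, hEq⟩
    · rw [hEq] at hsmproc
      exact hsmnot hsmproc
    · have hsmp : sm = p := by
        rw [hEq] at hsmproc
        rcases Set.mem_insert_iff.mp hsmproc with h | h
        · exact h
        · exact absurd h hsmnot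
      subst hsmp
      -- (W, g') is a pool member at step n₁
      have hsmB'' : sm ∈ B'' := hsmD.1
      have hsmBres : sm ∈ Bres B W := by rw [← hchar]; exact hsmB''
      have hpoolW : PoolMem lt' B (sq n₁).1 sm W g' := by
        refine ⟨fun x hx => hYZ n₁ (hWY hx), hWinf, hsmBres.2, ?_, ?_, ?_⟩
        · rw [← hchar]; exact hbad''
        · intro s hsW
          have hsB'' : s ∈ B'' := by rw [hchar]; exact hsW
          refine le'_trans htrans (hle'' s hsB'') ?_
          exact hgile s hsW.1 (fun x hx => hWY (hsW.2 x hx)) n₁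
        · intro t htproc htW
          have htB : t ∈ B := ((sq n₁).2.hproc t htproc).1
          have htB'' : t ∈ B'' := by rw [hchar]; exact ⟨htB, htW⟩
          have htnotD : t ∉ D := by
            intro hDt
            exact hN₁min n₁ hn₁lt ⟨t, hDt, htproc⟩
          have h1 : g' t = gi t := by
            rcases hle'' t htB'' with h | h
            · exact absurd ⟨htB'', h⟩ htnotD
            · exact h
          rw [h1]
          exact hgi t n₁ htproc
      -- but g' drops at sm below the chosen minimal value
      have hmB : (sq n₁).1.m ∈ sm := ((sq n₁).2.hpend sm (by rw [hpe]; simp)).2.2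
      have hval : (sq (n₁ + 1)).1.g sm = k sm := by
        rw [hEq]
        dsimp only [mixg]
        rw [if_pos]
        exact ⟨hpool.2.2.1, fun hc => absurd (hc _ hmB) (lt_irrefl _)⟩
      have hgism : gi sm = k sm := by
        rw [hgi sm (n₁ + 1) hsmproc, hval]
      have := hmin W g' hpoolW
      rw [← hgism] at this
      exact this hsmD.2
end

section
/- Minimal bad sequence lemma: Let (Q, ⪯) be a quasi-order and <' a well-founded transitive relation on Q compatible with ⪯. If there exists a bad Q-sequence (a map q : A → Q, A ⊆ ℕ infinite, with qₙ ⋠ qₘ for all n < m in A), then there exists a minimal bad Q-sequence: a bad sequence ⟨qₙ : n ∈ A⟩ such that no bad sequence ⟨q'ₙ : n ∈ A'⟩ with A' ⊆ A, q'ₙ ≤' qₙ for all n ∈ A', and q'ₙ <' qₙ for some n ∈ A', exists. -/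
namespace MBS

variable {Q : Type} [Preorder Q]

/-- A bad sequence: infinite index set, no increasing pair. -/
def Bad (A : Set ℕ) (p : ℕ → Q) : Prop :=
  A.Infinite ∧ ∀ n ∈ A, ∀ m ∈ A, n < m → ¬ p n ≤ p m

/-- Bad sequences whose index set starts with the chosen indices
`(g 0).1 < (g 1).1 < ⋯` carrying the chosen values. -/
def Ext (k : ℕ) (g : ∀ j, j < k → ℕ × Q) (A : Set ℕ) (p : ℕ → Q) : Prop :=
  Bad A p ∧ ∀ i, ∀ hi : i < k, (g i hi).1 ∈ A ∧ p (g i hi).1 = (g i hi).2 ∧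
    ∀ m ∈ A, m < (g i hi).1 → ∃ j, ∃ hj : j < k, m = (g j hj).1

/-- Possible values at position `n` of a bad sequence extending the choices `g`,
with `n` beyond all chosen indices and no unused indices below `n`. -/
def Vals (k : ℕ) (g : ∀ j, j < k → ℕ × Q) (n : ℕ) : Set Q :=
  {v | ∃ A p, Ext k g A p ∧ n ∈ A ∧ p n = v ∧ (∀ j, ∀ hj : j < k, (g j hj).1 < n) ∧
    ∀ m ∈ A, m < n → ∃ j, ∃ hj : j < k, m = (g j hj).1}

open Classical in
noncomputable def step (lt' : Q → Q → Prop) (hwf : WellFounded lt') (q₀ : Q)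
    (k : ℕ) (g : ∀ j, j < k → ℕ × Q) : ℕ × Q :=
  (sInf {n | (Vals k g n).Nonempty},
    if h : (Vals k g (sInf {n | (Vals k g n).Nonempty})).Nonempty then hwf.min _ h else q₀)

noncomputable def seq (lt' : Q → Q → Prop) (hwf : WellFounded lt') (q₀ : Q) : ℕ → ℕ × Q :=
  WellFounded.fix Nat.lt_wfRel.wf (step lt' hwf q₀)

variable (lt' : Q → Q → Prop) (hwf : WellFounded lt') (q₀ : Q)

noncomputable def G (k : ℕ) : ∀ j, j < k → ℕ × Q := fun j _ => seq lt' hwf q₀ j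

@[simp] lemma G_apply (k j : ℕ) (hj : j < k) : G lt' hwf q₀ k j hj = seq lt' hwf q₀ j := rfl

lemma seq_eq (k : ℕ) : seq lt' hwf q₀ k = step lt' hwf q₀ k (G lt' hwf q₀ k) :=
  WellFounded.fix_eq _ _ _

lemma seq_fst (k : ℕ) :
    (seq lt' hwf q₀ k).1 = sInf {n | (Vals k (G lt' hwf q₀ k) n).Nonempty} := by
  rw [seq_eq]; rfl

lemma seq_snd_mem (k : ℕ)
    (h : (Vals k (G lt' hwf q₀ k) ((seq lt' hwf q₀ k).1)).Nonempty) :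
    (seq lt' hwf q₀ k).2 ∈ Vals k (G lt' hwf q₀ k) ((seq lt' hwf q₀ k).1) := by
  have hf := seq_fst lt' hwf q₀ k
  rw [hf] at h ⊢
  rw [seq_eq]
  show (step lt' hwf q₀ k (G lt' hwf q₀ k)).2 ∈ _
  unfold step
  simp only
  rw [dif_pos h]
  exact hwf.min_mem _ h

lemma seq_snd_min (k : ℕ)
    (h : (Vals k (G lt' hwf q₀ k) ((seq lt' hwf q₀ k).1)).Nonempty) :
    ∀ v ∈ Vals k (G lt' hwf q₀ k) ((seq lt' hwf q₀ k).1), ¬ lt' v ((seq lt' hwf q₀ k).2) := by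
  intro v hv
  have hf := seq_fst lt' hwf q₀ k
  rw [hf] at h hv
  rw [seq_eq]
  show ¬ lt' v (step lt' hwf q₀ k (G lt' hwf q₀ k)).2
  unfold step
  simp only
  rw [dif_pos h]
  exact hwf.not_lt_min _ hv

lemma vals_nonempty (k : ℕ) (hE : ∃ A p, Ext k (G lt' hwf q₀ k) A p) :
    (Vals k (G lt' hwf q₀ k) ((seq lt' hwf q₀ k).1)).Nonempty := by
  obtain ⟨A, p, hExt⟩ := hE
  obtain ⟨n, hnA, hn⟩ := hExt.1.1.exists_gt ((Finset.range k).sup fun j => (seq lt' hwf q₀ j).1)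
  have hgt : ∀ j, ∀ hj : j < k, (G lt' hwf q₀ k j hj).1 < n := by
    intro j hj
    exact lt_of_le_of_lt (Finset.le_sup (f := fun j => (seq lt' hwf q₀ j).1) (Finset.mem_range.mpr hj)) hn
  set A' : Set ℕ :=
    {m | m ∈ A ∧ ((∃ j, ∃ hj : j < k, m = (G lt' hwf q₀ k j hj).1) ∨ n ≤ m)} with hA'
  have hsub : A' ⊆ A := fun m hm => hm.1
  have hExt' : Ext k (G lt' hwf q₀ k) A' p := by
    refine ⟨⟨?_, ?_⟩, ?_⟩
    · refine Set.Infinite.mono ?_ (hExt.1.1.diff (Set.finite_Iio n))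
      intro m hm
      exact ⟨hm.1, Or.inr (not_lt.mp hm.2)⟩
    · intro a ha b hb hab
      exact hExt.1.2 a (hsub ha) b (hsub hb) hab
    · intro i hi
      obtain ⟨h1, h2, h3⟩ := hExt.2 i hi
      refine ⟨⟨h1, Or.inl ⟨i, hi, rfl⟩⟩, h2, fun m hm hlt => h3 m (hsub hm) hlt⟩
  have hmem : p n ∈ Vals k (G lt' hwf q₀ k) n := by
    refine ⟨A', p, hExt', ⟨hnA, Or.inr le_rfl⟩, rfl, hgt, ?_⟩
    intro m hm hlt
    rcases hm.2 with h | h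
    · exact h
    · omega
  have hS : ({n' | (Vals k (G lt' hwf q₀ k) n').Nonempty} : Set ℕ).Nonempty :=
    ⟨n, p n, hmem⟩
  rw [seq_fst]
  exact Nat.sInf_mem hS

lemma exists_ext (A₁ : Set ℕ) (q₁ : ℕ → Q) (hb : Bad A₁ q₁) :
    ∀ k, ∃ A p, Ext k (G lt' hwf q₀ k) A p := by
  intro k
  induction k with
  | zero => exact ⟨A₁, q₁, hb, fun i hi => absurd hi (Nat.not_lt_zero i)⟩
  | succ k ih =>
    have h := vals_nonempty lt' hwf q₀ k ih
    obtain ⟨A, p, hExt, hnA, hpn, hgt, htrim⟩ := seq_snd_mem lt' hwf q₀ k h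
    refine ⟨A, p, hExt.1, ?_⟩
    intro i hi
    rcases Nat.lt_succ_iff_lt_or_eq.mp hi with hik | hik
    · obtain ⟨h1, h2, h3⟩ := hExt.2 i hik
      refine ⟨h1, h2, fun m hm hlt => ?_⟩
      obtain ⟨j, hj, hmj⟩ := h3 m hm hlt
      exact ⟨j, Nat.lt_succ_of_lt hj, hmj⟩
    · subst hik
      refine ⟨hnA, hpn, fun m hm hlt => ?_⟩
      obtain ⟨j, hj, hmj⟩ := htrim m hm hlt
      exact ⟨j, Nat.lt_succ_of_lt hj, hmj⟩

lemma seq_mono (A₁ : Set ℕ) (q₁ : ℕ → Q) (hb : Bad A₁ q₁) :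
    StrictMono fun k => (seq lt' hwf q₀ k).1 := by
  intro a b hab
  obtain ⟨v, A2, p2, _, _, _, hgt, _⟩ :=
    vals_nonempty lt' hwf q₀ b (exists_ext lt' hwf q₀ A₁ q₁ hb b)
  exact hgt a hab

end MBS




/-- Minimal bad sequence lemma: if `<'` is a well-founded transitive relation
compatible with the quasi-order `≤` and there is a bad `Q`-sequence, then there
is a minimal bad `Q`-sequence. -/
theorem stmt_10 {Q : Type} [Preorder Q] (lt' : Q → Q → Prop)
    (hwf : WellFounded lt') (htrans : Transitive lt')
    (hcompat : ∀ a b : Q, lt' a b → a ≤ b)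
    (A : Set ℕ) (hA : A.Infinite) (q : ℕ → Q)
    (hbad : ∀ n ∈ A, ∀ m ∈ A, n < m → ¬ q n ≤ q m) :
    ∃ (A₀ : Set ℕ) (p : ℕ → Q), A₀.Infinite ∧
      (∀ n ∈ A₀, ∀ m ∈ A₀, n < m → ¬ p n ≤ p m) ∧
      ¬ ∃ (A' : Set ℕ) (p' : ℕ → Q), A'.Infinite ∧ A' ⊆ A₀ ∧
          (∀ n ∈ A', ∀ m ∈ A', n < m → ¬ p' n ≤ p' m) ∧
          (∀ n ∈ A', lt' (p' n) (p n) ∨ p' n = p n) ∧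
          (∃ n ∈ A', lt' (p' n) (p n)) := by
  classical
  have hb : MBS.Bad A q := ⟨hA, hbad⟩
  set q₀ := q 0 with hq₀
  set s : ℕ → ℕ × Q := MBS.seq lt' hwf q₀ with hs
  have hext := MBS.exists_ext lt' hwf q₀ A q hb
  have hmono : StrictMono fun k => (s k).1 := MBS.seq_mono lt' hwf q₀ A q hb
  have hmem : ∀ k, (s k).2 ∈ MBS.Vals k (MBS.G lt' hwf q₀ k) ((s k).1) :=
    fun k => MBS.seq_snd_mem lt' hwf q₀ k (MBS.vals_nonempty lt' hwf q₀ k (hext k))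
  have hmin : ∀ k, ∀ v ∈ MBS.Vals k (MBS.G lt' hwf q₀ k) ((s k).1), ¬ lt' v ((s k).2) :=
    fun k => MBS.seq_snd_min lt' hwf q₀ k (MBS.vals_nonempty lt' hwf q₀ k (hext k))
  set A₀ : Set ℕ := Set.range fun k => (s k).1 with hA₀
  set p : ℕ → Q := fun n => if h : ∃ k, (s k).1 = n then (s h.choose).2 else q₀ with hp
  have hpdef : ∀ k, p ((s k).1) = (s k).2 := by
    intro k
    have h : ∃ k', (s k').1 = (s k).1 := ⟨k, rfl⟩
    simp only [hp]
    rw [dif_pos h]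
    have hck : h.choose = k := hmono.injective h.choose_spec
    rw [hck]
  have hinf : A₀.Infinite := Set.infinite_range_of_injective hmono.injective
  have hbad₀ : ∀ n ∈ A₀, ∀ m ∈ A₀, n < m → ¬ p n ≤ p m := by
    rintro n ⟨i, rfl⟩ m ⟨j, rfl⟩ hnm
    simp only at hnm ⊢
    have hij : i < j := hmono.lt_iff_lt.mp hnm
    obtain ⟨B, pB, hExt, hnB, hpB, _, _⟩ := hmem j
    obtain ⟨h1, h2, _⟩ := hExt.2 i hij
    simp only [MBS.G_apply] at h1 h2
    have hne := hExt.1.2 _ h1 _ hnB hnm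
    rw [h2, hpB] at hne
    rw [hpdef i, hpdef j]
    exact hne
  refine ⟨A₀, p, hinf, hbad₀, ?_⟩
  rintro ⟨A', p', hA'inf, hsub, hbadA', hle, n₀, hn₀, hstrict⟩
  obtain ⟨j, hj⟩ := hsub hn₀
  simp only at hj
  have hple : ∀ m ∈ A', p' m ≤ p m := by
    intro m hm
    rcases hle m hm with h | h
    · exact hcompat _ _ h
    · exact le_of_eq h
  set A'' : Set ℕ := {m | (m ∈ A₀ ∧ m < n₀) ∨ (m ∈ A' ∧ n₀ ≤ m)} with hA''
  set p'' : ℕ → Q := fun m => if m < n₀ then p m else p' m with hp''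
  have hmemVals : p' n₀ ∈ MBS.Vals j (MBS.G lt' hwf q₀ j) ((s j).1) := by
    rw [hj]
    refine ⟨A'', p'', ⟨⟨?_, ?_⟩, ?_⟩, Or.inr ⟨hn₀, le_rfl⟩, ?_, ?_, ?_⟩
    · -- A'' infinite
      refine Set.Infinite.mono ?_ (hA'inf.diff (Set.finite_Iio n₀))
      intro m hm
      exact Or.inr ⟨hm.1, not_lt.mp hm.2⟩
    · -- A'' bad
      rintro a (⟨haA₀, halt⟩ | ⟨haA', hage⟩) b hbmem hab
      · have hpa : p'' a = p a := if_pos halt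
        rcases hbmem with ⟨hbA₀, hblt⟩ | ⟨hbA', hbge⟩
        · have hpb : p'' b = p b := if_pos hblt
          rw [hpa, hpb]
          exact hbad₀ a haA₀ b hbA₀ hab
        · have hpb : p'' b = p' b := if_neg (not_lt.mpr hbge)
          rw [hpa, hpb]
          intro hle'
          exact hbad₀ a haA₀ b (hsub hbA') hab (le_trans hle' (hple b hbA'))
      · rcases hbmem with ⟨_, hblt⟩ | ⟨hbA', hbge⟩
        · omega
        · have hpa : p'' a = p' a := if_neg (not_lt.mpr hage)
          have hpb : p'' b = p' b := if_neg (not_lt.mpr hbge)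
          rw [hpa, hpb]
          exact hbadA' a haA' b hbA' hab
    · -- Ext clause
      intro i hi
      simp only [MBS.G_apply, ← hs]
      have hilt : (s i).1 < n₀ := by rw [← hj]; exact hmono hi
      refine ⟨Or.inl ⟨⟨i, rfl⟩, hilt⟩, ?_, ?_⟩
      · show p'' ((s i).1) = (s i).2
        rw [hp'']
        simp only
        rw [if_pos hilt]
        exact hpdef i
      · rintro m (⟨⟨j', hj'⟩, hmlt⟩ | ⟨_, hmge⟩) hlt
        · simp only at hj'
          have : j' < i := by
            apply hmono.lt_iff_lt.mp
            show (s j').1 < (s i).1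
            rw [hj']
            exact hlt
          exact ⟨j', lt_trans this hi, hj'.symm⟩
        · omega
    · show p'' n₀ = p' n₀
      rw [hp'']
      simp only
      rw [if_neg (lt_irrefl n₀)]
    · intro i hi
      simp only [MBS.G_apply]
      rw [← hj]
      exact hmono hi
    · rintro m (⟨⟨j', hj'⟩, hmlt⟩ | ⟨_, hmge⟩) hlt
      · simp only [MBS.G_apply]
        simp only at hj'
        have : j' < j := by
          apply hmono.lt_iff_lt.mp
          show (s j').1 < (s j).1
          rw [hj', hj]
          exact hlt
        exact ⟨j', this, hj'.symm⟩
      · omega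
  have hcon := hmin j (p' n₀) hmemVals
  apply hcon
  have hpn : p n₀ = (s j).2 := by rw [← hj]; exact hpdef j
  rw [hpn] at hstrict
  exact hstrict
end

section
/- If σ and τ are transfinite sequences in Q (indexed by countable ordinals) with σ = Σₙ σₙ and τ = Σₙ τₙ (infinite concatenations), the sequence ⟨τₙ⟩ is quasi-monotonic (for all n there is m > n with τₙ ≤ τₘ), and σ is not embeddable in τ, then there exists n₀ such that for all m, σ_{n₀} is not embeddable in the finite concatenation Σ_{n ≤ m} τₙ. -/
/-- A transfinite sequence of elements of `Q`: a length (an ordinal) together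
with a function giving the terms (values at or beyond `len` are irrelevant). -/
structure TSeq (Q : Type) where
  len : Ordinal
  f : Ordinal → Q

/-- Embeddability of transfinite sequences: a strictly increasing map of the
index ordinals under which terms grow. -/
def TSeq.Emb {Q : Type} [Preorder Q] (σ τ : TSeq Q) : Prop :=
  ∃ g : Ordinal → Ordinal,
    (∀ β, β < σ.len → g β < τ.len) ∧
    (∀ β γ, β < γ → γ < σ.len → g β < g γ) ∧
    (∀ β, β < σ.len → σ.f β ≤ τ.f (g β))

/-- `τ = Σₙ σₙ`, the infinite concatenation of the `σₙ`. -/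
def IsConcat {Q : Type} (τ : TSeq Q) (σs : ℕ → TSeq Q) : Prop :=
  ∃ g : ℕ → Ordinal, g 0 = 0 ∧ (∀ n, g (n + 1) = g n + (σs n).len) ∧
    τ.len = ⨆ n, g n ∧
    ∀ n, ∀ β, β < (σs n).len → τ.f (g n + β) = (σs n).f β

/-- `ρ = Σ_{n < k} σₙ`, the concatenation of the first `k` of the `σₙ`. -/
def IsFinConcat {Q : Type} (ρ : TSeq Q) (σs : ℕ → TSeq Q) (k : ℕ) : Prop :=
  ∃ g : ℕ → Ordinal, g 0 = 0 ∧ (∀ n, n < k → g (n + 1) = g n + (σs n).len) ∧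
    ρ.len = g k ∧
    ∀ n, n < k → ∀ β, β < (σs n).len → ρ.f (g n + β) = (σs n).f β

/-- `⟨σₙ⟩` is quasi-monotonic: every term embeds into a later term. -/
def QuasiMonotonic {Q : Type} [Preorder Q] (σs : ℕ → TSeq Q) : Prop :=
  ∀ n, ∃ m, n < m ∧ TSeq.Emb (σs n) (σs m)

/-- The class `H` of hereditarily indecomposable sequences: sequences of length 1,
closed under quasi-monotonic infinite concatenations. -/
inductive InH {Q : Type} [Preorder Q] : TSeq Q → Prop
  | single (σ : TSeq Q) : σ.len = 1 → InH σ
  | concat (τ : TSeq Q) (σs : ℕ → TSeq Q) :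
      (∀ n, InH (σs n)) → QuasiMonotonic σs → IsConcat τ σs → InH τ

namespace Stmt11Aux

variable {Q : Type} [Preorder Q]

theorem emb_trans {a b c : TSeq Q} (h1 : TSeq.Emb a b) (h2 : TSeq.Emb b c) :
    TSeq.Emb a c := by
  obtain ⟨f, hf1, hf2, hf3⟩ := h1
  obtain ⟨g, hg1, hg2, hg3⟩ := h2
  exact ⟨g ∘ f, fun β hβ => hg1 _ (hf1 β hβ),
    fun β γ hβγ hγ => hg2 _ _ (hf2 β γ hβγ hγ) (hf1 γ hγ),
    fun β hβ => le_trans (hf3 β hβ) (hg3 _ (hf1 β hβ))⟩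

theorem qm' {τs : ℕ → TSeq Q} (hqm : QuasiMonotonic τs) (n : ℕ) :
    ∀ N, ∃ m, N < m ∧ TSeq.Emb (τs n) (τs m) := by
  intro N
  induction N with
  | zero =>
    obtain ⟨m, hm, he⟩ := hqm n
    exact ⟨m, by omega, he⟩
  | succ N ih =>
    obtain ⟨m, hm, he⟩ := ih
    rcases Nat.lt_or_ge (N + 1) m with h | h
    · exact ⟨m, h, he⟩
    · obtain ⟨m', hm', he'⟩ := hqm m
      exact ⟨m', by omega, emb_trans he he'⟩

theorem decomp (g : ℕ → Ordinal) (h0 : g 0 = 0) (β : Ordinal) (h : ∃ n, β < g n) :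
    ∃ n, g n ≤ β ∧ β < g (n + 1) := by
  classical
  cases hn : Nat.find h with
  | zero =>
    exfalso
    have := Nat.find_spec h
    rw [hn, h0] at this
    exact (not_lt.2 (zero_le (a := β))) this
  | succ k =>
    have h1 := Nat.find_spec h
    rw [hn] at h1
    have h2 : ¬ β < g k := Nat.find_min h (by omega)
    exact ⟨k, not_lt.1 h2, h1⟩

/-- Any finite concatenation of the `τs` embeds into `τ` entirely beyond block `N`. -/
theorem finA (τ : TSeq Q) (τs : ℕ → TSeq Q) (gτ : ℕ → Ordinal)
    (hτ2 : ∀ n, gτ (n + 1) = gτ n + (τs n).len)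
    (hτval : ∀ n, ∀ β, β < (τs n).len → τ.f (gτ n + β) = (τs n).f β)
    (hq : ∀ n N, ∃ m, N < m ∧ TSeq.Emb (τs n) (τs m))
    (ρ : TSeq Q) (K : ℕ) (gρ : ℕ → Ordinal) (hρ0 : gρ 0 = 0)
    (hρ2 : ∀ n, n < K → gρ (n + 1) = gρ n + (τs n).len)
    (hρval : ∀ n, n < K → ∀ β, β < (τs n).len → ρ.f (gρ n + β) = (τs n).f β) :
    ∀ k, k ≤ K → ∀ N, ∃ M, N ≤ M ∧ ∃ e : Ordinal → Ordinal,
      (∀ β γ, β < γ → γ < gρ k → e β < e γ) ∧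
      (∀ β, β < gρ k → gτ N ≤ e β ∧ e β < gτ M ∧ ρ.f β ≤ τ.f (e β)) := by
  have gτmono : Monotone gτ := monotone_nat_of_le_succ fun n => by
    rw [hτ2]; exact le_self_add
  intro k
  induction k with
  | zero =>
    intro _ N
    exact ⟨N, le_rfl, id, fun β γ _ hγ => absurd hγ (by simp [hρ0]),
      fun β hβ => absurd hβ (by simp [hρ0])⟩
  | succ k ih =>
    intro hk N
    obtain ⟨M, hNM, e, he1, he2⟩ := ih (by omega) N
    obtain ⟨j, hMj, h, hh1, hh2, hh3⟩ := hq k M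
    have hkK : k < K := hk
    refine ⟨j + 1, by omega,
      fun β => if β < gρ k then e β else gτ j + h (β - gρ k), ?_, ?_⟩
    · intro β γ hβγ hγ
      have hγ1 : γ < gρ k + (τs k).len := (hρ2 k hkK) ▸ hγ
      by_cases hβk : β < gρ k
      · simp only [if_pos hβk]
        by_cases hγk : γ < gρ k
        · simp only [if_pos hγk]; exact he1 β γ hβγ hγk
        · simp only [if_neg hγk]
          calc e β < gτ M := (he2 β hβk).2.1
            _ ≤ gτ j := gτmono hMj.le
            _ ≤ gτ j + h (γ - gρ k) := le_self_add
      · have hγk : ¬ γ < gρ k := fun hc => hβk (hβγ.trans hc)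
        simp only [if_neg hβk, if_neg hγk]
        have hle : gρ k ≤ β := not_lt.1 hβk
        have hβc : gρ k + (β - gρ k) = β := Ordinal.add_sub_cancel_of_le hle
        have hγc : gρ k + (γ - gρ k) = γ :=
          Ordinal.add_sub_cancel_of_le (hle.trans hβγ.le)
        have hlt : β - gρ k < γ - gρ k := by
          rw [← add_lt_add_iff_left (gρ k), hβc, hγc]; exact hβγ
        have hγlen : γ - gρ k < (τs k).len := by
          rw [← add_lt_add_iff_left (gρ k), hγc]; exact hγ1
        rw [add_lt_add_iff_left]
        exact hh2 _ _ hlt hγlen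
    · intro β hβ
      have hβ1 : β < gρ k + (τs k).len := (hρ2 k hkK) ▸ hβ
      by_cases hβk : β < gρ k
      · simp only [if_pos hβk]
        obtain ⟨ha, hb, hc⟩ := he2 β hβk
        exact ⟨ha, hb.trans_le (gτmono (by omega)), hc⟩
      · simp only [if_neg hβk]
        have hle : gρ k ≤ β := not_lt.1 hβk
        have hcan : gρ k + (β - gρ k) = β := Ordinal.add_sub_cancel_of_le hle
        have hβlen : β - gρ k < (τs k).len := by
          rw [← add_lt_add_iff_left (gρ k), hcan]; exact hβ1
        have hhlt : h (β - gρ k) < (τs j).len := hh1 _ hβlen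
        refine ⟨le_trans (gτmono (hNM.trans hMj.le)) (le_self_add), ?_, ?_⟩
        · rw [hτ2 j]; exact (add_lt_add_iff_left _).2 hhlt
        · have hv := hρval k hkK _ hβlen
          rw [hcan] at hv
          calc ρ.f β = (τs k).f (β - gρ k) := hv
            _ ≤ (τs j).f (h (β - gρ k)) := hh3 _ hβlen
            _ = τ.f (gτ j + h (β - gρ k)) := (hτval j _ hhlt).symm

end Stmt11Aux

/-- If `σ = Σₙ σₙ`, `τ = Σₙ τₙ` with `⟨τₙ⟩` quasi-monotonic and `σ` does not
embed in `τ`, then some `σ_{n₀}` embeds in no finite concatenation `Σ_{n ≤ m} τₙ`. -/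
theorem stmt_11 {Q : Type} [Preorder Q] (σ τ : TSeq Q) (σs τs : ℕ → TSeq Q)
    (hσ : IsConcat σ σs) (hτ : IsConcat τ τs)
    (hqm : QuasiMonotonic τs) (hne : ¬ TSeq.Emb σ τ) :
    ∃ n₀ : ℕ, ∀ m : ℕ, ∀ ρ : TSeq Q, IsFinConcat ρ τs (m + 1) →
      ¬ TSeq.Emb (σs n₀) ρ := by
  classical
  by_contra hcon
  push_neg at hcon
  obtain ⟨gσ, hσ0, hσ2, hσlen, hσval⟩ := hσ
  obtain ⟨gτ, hτ0, hτ2, hτlen, hτval⟩ := hτ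
  have gτmono : Monotone gτ := monotone_nat_of_le_succ fun n => by
    rw [hτ2]; exact le_self_add
  have gσmono : Monotone gσ := monotone_nat_of_le_succ fun n => by
    rw [hσ2]; exact le_self_add
  have hq := Stmt11Aux.qm' hqm
  have key : ∀ n N, ∃ M, N ≤ M ∧ ∃ E : Ordinal → Ordinal,
      (∀ β γ, β < γ → γ < (σs n).len → E β < E γ) ∧
      (∀ β, β < (σs n).len → gτ N ≤ E β ∧ E β < gτ M ∧ (σs n).f β ≤ τ.f (E β)) := by
    intro n N
    obtain ⟨m, ρ, hfc, f, hf1, hf2, hf3⟩ := hcon n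
    obtain ⟨gρ, hρ0, hρ2, hρlen, hρval⟩ := hfc
    obtain ⟨M, hNM, e, he1, he2⟩ :=
      Stmt11Aux.finA τ τs gτ hτ2 hτval hq ρ (m + 1) gρ hρ0 hρ2 hρval (m + 1) le_rfl N
    refine ⟨M, hNM, e ∘ f, ?_, ?_⟩
    · intro β γ hβγ hγ
      exact he1 _ _ (hf2 β γ hβγ hγ) (hρlen ▸ hf1 γ hγ)
    · intro β hβ
      obtain ⟨ha, hb, hc⟩ := he2 _ (hρlen ▸ hf1 β hβ)
      exact ⟨ha, hb, le_trans (hf3 β hβ) hc⟩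
  choose M hM E hE1 hE2 using key
  set Ns : ℕ → ℕ := fun n => Nat.rec 0 (fun k ih => M k ih) n with hNsdef
  have hNs : ∀ n, Ns (n + 1) = M n (Ns n) := fun n => rfl
  have hNsmono : Monotone Ns := monotone_nat_of_le_succ fun n => hM n (Ns n)
  have hdec : ∀ β, β < σ.len → ∃ n, gσ n ≤ β ∧ β < gσ (n + 1) := by
    intro β hβ
    apply Stmt11Aux.decomp gσ hσ0
    rw [hσlen] at hβ
    exact Ordinal.lt_iSup_iff.1 hβ
  choose idx hidx1 hidx2 using hdec
  have idxmono : ∀ β γ (hβ : β < σ.len) (hγ : γ < σ.len), β < γ →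
      idx β hβ ≤ idx γ hγ := by
    intro β γ hβ hγ hβγ
    by_contra hlt
    push_neg at hlt
    have h1 : gσ (idx γ hγ + 1) ≤ gσ (idx β hβ) := gσmono hlt
    exact absurd ((hidx2 γ hγ).trans_le (h1.trans ((hidx1 β hβ).trans hβγ.le)))
      (lt_irrefl γ)
  have hblen : ∀ β (hβ : β < σ.len), β - gσ (idx β hβ) < (σs (idx β hβ)).len := by
    intro β hβ
    rw [← add_lt_add_iff_left (gσ (idx β hβ)),
      Ordinal.add_sub_cancel_of_le (hidx1 β hβ), ← hσ2]
    exact hidx2 β hβ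
  refine hne ⟨fun β => if hβ : β < σ.len then
      E (idx β hβ) (Ns (idx β hβ)) (β - gσ (idx β hβ)) else 0, ?_, ?_, ?_⟩
  · intro β hβ
    simp only [dif_pos hβ]
    have h1 := (hE2 (idx β hβ) (Ns (idx β hβ)) _ (hblen β hβ)).2.1
    calc E (idx β hβ) (Ns (idx β hβ)) (β - gσ (idx β hβ))
        < gτ (M (idx β hβ) (Ns (idx β hβ))) := h1
      _ ≤ ⨆ n, gτ n := Ordinal.le_iSup gτ _
      _ = τ.len := hτlen.symm
  · intro β γ hβγ hγ
    have hβ : β < σ.len := hβγ.trans hγ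
    simp only [dif_pos hβ, dif_pos hγ]
    rcases (idxmono β γ hβ hγ hβγ).lt_or_eq with hlt | heq
    · calc E (idx β hβ) (Ns (idx β hβ)) (β - gσ (idx β hβ))
          < gτ (M (idx β hβ) (Ns (idx β hβ))) :=
            (hE2 (idx β hβ) (Ns (idx β hβ)) _ (hblen β hβ)).2.1
        _ = gτ (Ns (idx β hβ + 1)) := by rw [hNs]
        _ ≤ gτ (Ns (idx γ hγ)) := gτmono (hNsmono hlt)
        _ ≤ E (idx γ hγ) (Ns (idx γ hγ)) (γ - gσ (idx γ hγ)) :=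
            (hE2 (idx γ hγ) (Ns (idx γ hγ)) _ (hblen γ hγ)).1
    · rw [heq]
      apply hE1 (idx γ hγ) (Ns (idx γ hγ))
      · have h1 : gσ (idx γ hγ) ≤ β := heq ▸ hidx1 β hβ
        rw [← add_lt_add_iff_left (gσ (idx γ hγ)),
          Ordinal.add_sub_cancel_of_le h1,
          Ordinal.add_sub_cancel_of_le (hidx1 γ hγ)]
        exact hβγ
      · exact hblen γ hγ
  · intro β hβ
    simp only [dif_pos hβ]
    have hv := hσval (idx β hβ) _ (hblen β hβ)
    rw [Ordinal.add_sub_cancel_of_le (hidx1 β hβ)] at hv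
    rw [hv]
    exact (hE2 (idx β hβ) (Ns (idx β hβ)) _ (hblen β hβ)).2.2
end

section
/- If the class H of hereditarily indecomposable Q-sequences is wqo under embeddability, then every countable transfinite sequence σ of elements of Q can be written as a concatenation of finitely many elements of H: there exist ordinals 0 = α₀ < α₁ < ⋯ < αₙ = lh(σ) such that each restriction σ↾[αᵢ, αᵢ₊₁) belongs to H. -/
/-- The restriction `σ↾[a,b)` of a transfinite sequence, re-indexed by the
order type `b - a` of the interval. -/
noncomputable def TSeq.restr {Q : Type} (σ : TSeq Q) (a b : Ordinal) : TSeq Q :=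
  ⟨b - a, fun γ => σ.f (a + γ)⟩


open Ordinal

lemma sub_add_sub' {a b c : Ordinal} (hab : a ≤ b) (hbc : b ≤ c) :
    c - a = (b - a) + (c - b) := by
  have h1 : a + ((b - a) + (c - b)) = c := by
    rw [← add_assoc, Ordinal.add_sub_cancel_of_le hab, Ordinal.add_sub_cancel_of_le hbc]
  calc c - a = (a + ((b - a) + (c - b))) - a := by rw [h1]
  _ = (b - a) + (c - b) := Ordinal.add_sub_cancel _ _

lemma sub_sub_of_le' {c a b : Ordinal} (h : a ≤ b) :
    (c + b) - (c + a) = b - a := by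
  have h1 : (c + a) + (b - a) = c + b := by
    rw [add_assoc, Ordinal.add_sub_cancel_of_le h]
  calc (c + b) - (c + a) = ((c + a) + (b - a)) - (c + a) := by rw [h1]
  _ = b - a := Ordinal.add_sub_cancel _ _

lemma cut_mono {α : ℕ → Ordinal} {n : ℕ} (h : ∀ i, i < n → α i < α (i + 1)) :
    ∀ i j, i ≤ j → j ≤ n → α i ≤ α j := by
  intro i j hij
  induction hij with
  | refl => intro _; exact le_rfl
  | @step m h' ih =>
    intro hjn
    exact le_trans (ih (le_of_lt (Nat.lt_of_succ_le hjn)))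
      (le_of_lt (h m (Nat.lt_of_succ_le hjn)))
lemma InH_congr {Q : Type} [Preorder Q] {σ τ : TSeq Q} (h : InH σ)
    (hlen : τ.len = σ.len) (hf : ∀ β, β < σ.len → τ.f β = σ.f β) : InH τ := by
  cases h with
  | single _ h1 => exact InH.single τ (hlen.trans h1)
  | concat _ σs hs hqm hc =>
    refine InH.concat τ σs hs hqm ?_
    obtain ⟨g, hg0, hgs, hglen, hgf⟩ := hc
    refine ⟨g, hg0, hgs, hlen.trans hglen, ?_⟩
    intro n β hβ
    have hlt : g n + β < σ.len := by
      rw [hglen]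
      exact lt_of_lt_of_le (by rw [hgs]; exact (add_lt_add_iff_left _).2 hβ)
        (Ordinal.le_iSup g (n + 1))
    rw [hf _ hlt, hgf n β hβ]

lemma restr_restr {Q : Type} (σ : TSeq Q) (c d a b : Ordinal) (h : a ≤ b) :
    (σ.restr c d).restr a b = σ.restr (c + a) (c + b) := by
  unfold TSeq.restr
  simp only [TSeq.mk.injEq]
  exact ⟨(sub_sub_of_le' h).symm, funext fun γ => by rw [add_assoc]⟩
open scoped Classical
lemma lift_iSup_nat (f : ℕ → Ordinal.{w}) :
    Ordinal.lift.{v} (⨆ n, f n) = ⨆ n, Ordinal.lift.{v} (f n) := by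
  apply le_antisymm
  · have h1 : (⨆ n, Ordinal.lift.{v} (f n)) ≤ Ordinal.lift.{v} (⨆ n, f n) :=
      Ordinal.iSup_le_iff.2 fun n => Ordinal.lift_le.2 (Ordinal.le_iSup f n)
    obtain ⟨s₀, hs₀⟩ := Ordinal.mem_range_lift_of_le h1
    have h2 : ∀ n, f n ≤ s₀ := fun n =>
      Ordinal.lift_le.1 (by rw [hs₀]; exact Ordinal.le_iSup (fun n => Ordinal.lift.{v} (f n)) n)
    rw [← hs₀]
    exact Ordinal.lift_le.2 (Ordinal.iSup_le_iff.2 h2)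
  · exact Ordinal.iSup_le_iff.2 fun n => Ordinal.lift_le.2 (Ordinal.le_iSup f n)

lemma countable_down (o : Ordinal.{u}) (h : o.card ≤ Cardinal.aleph0) :
    ∃ o₀ : Ordinal.{0}, Ordinal.lift.{u, 0} o₀ = o := by
  apply Ordinal.mem_range_lift_of_le
  have h1 : o < Cardinal.ord (Order.succ (Cardinal.aleph0 : Cardinal.{u})) :=
    Cardinal.lt_ord.2 (lt_of_le_of_lt h (Order.lt_succ _))
  have h2 : Ordinal.lift.{u, 0} (Cardinal.ord (Order.succ (Cardinal.aleph0 : Cardinal.{0})))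
      = Cardinal.ord (Order.succ (Cardinal.aleph0 : Cardinal.{u})) := by
    rw [Cardinal.lift_ord, Cardinal.lift_succ, Cardinal.lift_aleph0]
  rw [h2]; exact h1.le

noncomputable def liftT {Q : Type} (σ : TSeq Q) : TSeq Q :=
  ⟨Ordinal.lift.{0} σ.len, fun γ =>
    if h : ∃ γ₀, Ordinal.lift.{0} γ₀ = γ then σ.f h.choose else σ.f 0⟩

lemma liftT_len {Q : Type} (σ : TSeq Q) :
    (liftT σ).len = Ordinal.lift.{0} σ.len := rfl

lemma liftT_f {Q : Type} (σ : TSeq Q) (γ₀ : Ordinal.{0}) :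
    (liftT σ).f (Ordinal.lift.{0} γ₀) = σ.f γ₀ := by
  have h : ∃ c, Ordinal.lift.{0} c = Ordinal.lift.{0} γ₀ := ⟨γ₀, rfl⟩
  show (if h : ∃ c, Ordinal.lift.{0} c = Ordinal.lift.{0} γ₀ then σ.f h.choose else σ.f 0) = σ.f γ₀
  rw [dif_pos h]
  congr 1
  exact Ordinal.lift_inj.1 h.choose_spec

lemma Emb_congr {Q : Type} [Preorder Q] {σ σ' τ τ' : TSeq Q}
    (hs : σ.len = σ'.len) (hfs : ∀ β, β < σ.len → σ.f β = σ'.f β)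
    (ht : τ.len = τ'.len) (hft : ∀ β, β < τ.len → τ.f β = τ'.f β)
    (h : TSeq.Emb σ τ) : TSeq.Emb σ' τ' := by
  obtain ⟨g, h1, h2, h3⟩ := h
  refine ⟨g, ?_, ?_, ?_⟩
  · intro β hβ; rw [← ht]; exact h1 β (hs ▸ hβ)
  · intro β γ hβγ hγ; exact h2 β γ hβγ (hs ▸ hγ)
  · intro β hβ
    have hβ' : β < σ.len := hs ▸ hβ
    rw [← hfs β hβ', ← hft (g β) (h1 β hβ')]
    exact h3 β hβ'

lemma liftT_emb_iff {Q : Type} [Preorder Q] {σ τ : TSeq Q} :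
    TSeq.Emb (liftT σ) (liftT τ) ↔ TSeq.Emb σ τ := by
  constructor
  · rintro ⟨g', h1, h2, h3⟩
    refine ⟨fun γ => if h : ∃ δ, Ordinal.lift.{0} δ = g' (Ordinal.lift.{0} γ) then h.choose
      else 0, ?_, ?_, ?_⟩
    · intro β hβ
      beta_reduce
      have hlt : g' (Ordinal.lift.{0} β) < Ordinal.lift.{0} τ.len :=
        h1 _ (Ordinal.lift_lt.2 hβ)
      have hex : ∃ δ, Ordinal.lift.{0} δ = g' (Ordinal.lift.{0} β) :=
        Ordinal.mem_range_lift_of_le hlt.le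
      rw [dif_pos hex, ← Ordinal.lift_lt.{0}, hex.choose_spec]
      exact hlt
    · intro β γ hβγ hγ
      beta_reduce
      have hex1 : ∃ δ, Ordinal.lift.{0} δ = g' (Ordinal.lift.{0} β) :=
        Ordinal.mem_range_lift_of_le (h1 _ (Ordinal.lift_lt.2 (lt_trans hβγ hγ))).le
      have hex2 : ∃ δ, Ordinal.lift.{0} δ = g' (Ordinal.lift.{0} γ) :=
        Ordinal.mem_range_lift_of_le (h1 _ (Ordinal.lift_lt.2 hγ)).le
      rw [dif_pos hex1, dif_pos hex2, ← Ordinal.lift_lt.{0}, hex1.choose_spec,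
        hex2.choose_spec]
      exact h2 _ _ (Ordinal.lift_lt.2 hβγ) (Ordinal.lift_lt.2 hγ)
    · intro β hβ
      beta_reduce
      have hex : ∃ δ, Ordinal.lift.{0} δ = g' (Ordinal.lift.{0} β) :=
        Ordinal.mem_range_lift_of_le (h1 _ (Ordinal.lift_lt.2 hβ)).le
      rw [dif_pos hex]
      have := h3 (Ordinal.lift.{0} β) (Ordinal.lift_lt.2 hβ)
      rwa [liftT_f, ← hex.choose_spec, liftT_f] at this
  · rintro ⟨g, h1, h2, h3⟩
    refine ⟨fun γ => if h : ∃ γ₀, Ordinal.lift.{0} γ₀ = γ then Ordinal.lift.{0} (g h.choose)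
      else 0, ?_, ?_, ?_⟩
    · intro β hβ
      beta_reduce
      obtain ⟨β₀, hβ₀⟩ := Ordinal.mem_range_lift_of_le (le_of_lt (hβ : β < Ordinal.lift.{0} σ.len))
      subst hβ₀
      have hex : ∃ γ₀, Ordinal.lift.{0} γ₀ = Ordinal.lift.{0} β₀ := ⟨β₀, rfl⟩
      rw [dif_pos hex]
      have hc : hex.choose = β₀ := Ordinal.lift_inj.1 hex.choose_spec
      rw [hc]
      exact Ordinal.lift_lt.2 (h1 β₀ (Ordinal.lift_lt.1 hβ))
    · intro β γ hβγ hγ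
      beta_reduce
      obtain ⟨γ₀, hγ₀⟩ := Ordinal.mem_range_lift_of_le (le_of_lt (hγ : γ < Ordinal.lift.{0} σ.len))
      obtain ⟨β₀, hβ₀⟩ := Ordinal.mem_range_lift_of_le (le_of_lt (lt_trans hβγ hγ))
      subst hγ₀; subst hβ₀
      have hex1 : ∃ c, Ordinal.lift.{0} c = Ordinal.lift.{0} β₀ := ⟨β₀, rfl⟩
      have hex2 : ∃ c, Ordinal.lift.{0} c = Ordinal.lift.{0} γ₀ := ⟨γ₀, rfl⟩
      rw [dif_pos hex1, dif_pos hex2, (Ordinal.lift_inj.1 hex1.choose_spec :),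
        (Ordinal.lift_inj.1 hex2.choose_spec :)]
      exact Ordinal.lift_lt.2 (h2 β₀ γ₀ (Ordinal.lift_lt.1 hβγ) (Ordinal.lift_lt.1 hγ))
    · intro β hβ
      beta_reduce
      obtain ⟨β₀, hβ₀⟩ := Ordinal.mem_range_lift_of_le (le_of_lt (hβ : β < Ordinal.lift.{0} σ.len))
      subst hβ₀
      have hex : ∃ c, Ordinal.lift.{0} c = Ordinal.lift.{0} β₀ := ⟨β₀, rfl⟩
      rw [dif_pos hex, (Ordinal.lift_inj.1 hex.choose_spec :), liftT_f, liftT_f]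
      exact h3 β₀ (Ordinal.lift_lt.1 hβ)
lemma liftT_inH {Q : Type} [Preorder Q] {σ : TSeq Q} (h : InH σ) :
    InH (liftT σ) := by
  induction h with
  | single σ' h1 => exact InH.single _ (by rw [liftT_len, h1, Ordinal.lift_one])
  | concat τ σs hs hqm hc IH =>
    refine InH.concat _ (fun n => liftT (σs n)) IH ?_ ?_
    · intro n
      obtain ⟨m, hm, hemb⟩ := hqm n
      exact ⟨m, hm, liftT_emb_iff.2 hemb⟩
    · obtain ⟨g, hg0, hgs, hglen, hgf⟩ := hc
      refine ⟨fun n => Ordinal.lift.{0} (g n), ?_, ?_, ?_, ?_⟩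
      · show Ordinal.lift.{0} (g 0) = 0
        rw [hg0, Ordinal.lift_zero]
      · intro n
        show Ordinal.lift.{0} (g (n + 1)) = Ordinal.lift.{0} (g n) + (liftT (σs n)).len
        rw [hgs, Ordinal.lift_add]
        rfl
      · rw [liftT_len, hglen, lift_iSup_nat]
      · intro n γ' hγ'
        have hlt : γ' < Ordinal.lift.{0} (σs n).len := hγ'
        obtain ⟨γ₀, hγ₀⟩ := Ordinal.mem_range_lift_of_le hlt.le
        subst hγ₀
        rw [liftT_f, ← Ordinal.lift_add, liftT_f, hgf n γ₀ (Ordinal.lift_lt.1 hlt)]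

lemma inH_down {Q : Type} [Preorder Q] {τ' : TSeq Q} (h : InH τ') :
    ∀ σ : TSeq Q, τ'.len = Ordinal.lift.{0} σ.len →
      (∀ β, β < σ.len → τ'.f (Ordinal.lift.{0} β) = σ.f β) → InH σ := by
  induction h with
  | single σ' h1 =>
    intro σ hlen _
    refine InH.single σ ?_
    rw [h1, ← Ordinal.lift_one.{0, 0}] at hlen
    exact (Ordinal.lift_inj.1 hlen.symm)
  | concat τ'' σs' hs hqm hc IH =>
    intro σ hlen hf
    obtain ⟨g', hg0, hgs, hglen, hgf⟩ := hc
    have hg'mono : ∀ n, g' n ≤ g' (n + 1) := by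
      intro n; rw [hgs]; exact le_self_add
    have hg'le : ∀ n, g' n ≤ Ordinal.lift.{0} σ.len := by
      intro n; rw [← hlen, hglen]; exact Ordinal.le_iSup g' n
    choose gd hgd using fun n => Ordinal.mem_range_lift_of_le (hg'le n)
    have hgdmono : ∀ n, gd n ≤ gd (n + 1) := by
      intro n; rw [← Ordinal.lift_le.{0}, hgd, hgd]; exact hg'mono n
    set ld : ℕ → Ordinal.{0} := fun n => gd (n + 1) - gd n with hldd
    have hld : ∀ n, Ordinal.lift.{0} (ld n) = (σs' n).len := by
      intro n
      have h1 : g' n + Ordinal.lift.{0} (ld n) = g' n + (σs' n).len := by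
        rw [← hgd n, ← Ordinal.lift_add, Ordinal.add_sub_cancel_of_le (hgdmono n), hgd, hgd]
        exact hgs n
      calc Ordinal.lift.{0} (ld n) = (g' n + Ordinal.lift.{0} (ld n)) - g' n :=
            (Ordinal.add_sub_cancel _ _).symm
      _ = (g' n + (σs' n).len) - g' n := by rw [h1]
      _ = (σs' n).len := Ordinal.add_sub_cancel _ _
    have hmem : ∀ n (γ : Ordinal.{0}), γ < ld n → gd n + γ < σ.len := by
      intro n γ hγ
      rw [← Ordinal.lift_lt.{0}, Ordinal.lift_add, hgd]
      calc g' n + Ordinal.lift.{0} γ < g' n + (σs' n).len := by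
            rw [← hld n]; exact (add_lt_add_iff_left _).2 (Ordinal.lift_lt.2 hγ)
      _ = g' (n + 1) := (hgs n).symm
      _ ≤ Ordinal.lift.{0} σ.len := hg'le (n + 1)
    have hagree : ∀ n (γ : Ordinal.{0}), γ < ld n →
        (σs' n).f (Ordinal.lift.{0} γ) = σ.f (gd n + γ) := by
      intro n γ hγ
      have hlt : Ordinal.lift.{0} γ < (σs' n).len := by
        rw [← hld n]; exact Ordinal.lift_lt.2 hγ
      rw [← hgf n _ hlt, ← hf _ (hmem n γ hγ), Ordinal.lift_add, hgd]
    set σd : ℕ → TSeq Q := fun n => ⟨ld n, fun γ => σ.f (gd n + γ)⟩ with hσd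
    have hlcong : ∀ n, (σs' n).len = (liftT (σd n)).len := fun n => (hld n).symm
    have hfcong : ∀ n β, β < (σs' n).len → (σs' n).f β = (liftT (σd n)).f β := by
      intro n β hβ
      obtain ⟨β₀, hβ₀⟩ := Ordinal.mem_range_lift_of_le (le_of_lt (by rw [← hld n] at hβ; exact hβ))
      subst hβ₀
      rw [liftT_f, hagree n β₀ (by rwa [← Ordinal.lift_lt.{0}, hld n])]
    refine InH.concat σ σd ?_ ?_ ?_
    · intro n
      exact IH n (σd n) (hld n).symm (fun γ hγ => hagree n γ hγ)
    · intro n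
      obtain ⟨m, hm, hemb⟩ := hqm n
      refine ⟨m, hm, liftT_emb_iff.1 ?_⟩
      exact Emb_congr (hlcong n) (hfcong n) (hlcong m) (hfcong m) hemb
    · refine ⟨gd, ?_, ?_, ?_, ?_⟩
      · rw [← Ordinal.lift_inj.{0}, hgd, hg0, Ordinal.lift_zero]
      · intro n
        show gd (n + 1) = gd n + ld n
        rw [Ordinal.add_sub_cancel_of_le (hgdmono n)]
      · rw [← Ordinal.lift_inj.{0}, ← hlen, hglen, lift_iSup_nat]
        congr 1
        funext n
        rw [hgd]
      · intro n γ hγ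
        rfl
def badSeq (J : ℕ → ℕ) : ℕ → ℕ
  | 0 => J 0
  | s + 1 => J (badSeq J s + 1)

universe u1 u2

lemma key_lemma {Q : Type} [Preorder Q]
    (hwqo : ∀ q : ℕ → TSeq Q, (∀ n, InH (q n)) →
      ∃ n m : ℕ, n < m ∧ TSeq.Emb (q n) (q m))
    (σ : TSeq Q) (hccnt : σ.len.card ≤ Cardinal.aleph0)
    (β : ℕ → Ordinal.{0}) (hβ0 : β 0 = 0)
    (hmono : ∀ j, β j < β (j + 1)) (hsup : σ.len = ⨆ j, β j)
    (hH : ∀ j, InH (σ.restr (β j) (β (j + 1)))) :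
    ∃ (n : ℕ) (α : ℕ → Ordinal),
      α 0 = 0 ∧ α n = σ.len ∧ (∀ i, i < n → α i < α (i + 1)) ∧
      ∀ i, i < n → InH (σ.restr (α i) (α (i + 1))) := by
  have hβm : StrictMono β := strictMono_nat_of_lt_succ hmono
  set τ : ℕ → TSeq Q := fun j => σ.restr (β j) (β (j + 1)) with hτ
  -- transfer the wqo hypothesis across universes
  have hτcnt : ∀ j, (τ j).len.card ≤ Cardinal.aleph0 := by
    intro j
    have h1 : (τ j).len ≤ σ.len := by
      show β (j + 1) - β j ≤ σ.len
      exact le_trans (Ordinal.sub_le_self _ _) (hsup ▸ Ordinal.le_iSup β (j + 1))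
    exact le_trans (Ordinal.card_le_card h1) hccnt
  choose L hL using fun j => countable_down _ (hτcnt j)
  set d : ℕ → TSeq Q := fun j => ⟨L j, fun γ => (τ j).f (Ordinal.lift.{0, 0} γ)⟩ with hd
  have hdlen : ∀ j, (liftT (d j)).len = (τ j).len := fun j => hL j
  have hdf : ∀ j γ, γ < (liftT (d j)).len → (liftT (d j)).f γ = (τ j).f γ := by
    intro j γ hγ
    have hγ' : γ ≤ Ordinal.lift.{0, 0} (L j) := le_of_lt hγ
    obtain ⟨γ₀, hγ₀⟩ := Ordinal.mem_range_lift_of_le hγ'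
    subst hγ₀
    rw [liftT_f]
  have hdInH : ∀ j, InH (d j) := fun j =>
    inH_down (hH j) (d j) (hL j).symm (fun β₀ _ => rfl)
  have hwqoτ : ∀ js : ℕ → ℕ, ∃ s t, s < t ∧ TSeq.Emb (τ (js s)) (τ (js t)) := by
    intro js
    obtain ⟨s, t, hst, hemb⟩ := hwqo (fun s => liftT (d (js s)))
      (fun s => liftT_inH (hdInH _))
    refine ⟨s, t, hst, ?_⟩
    have h1 : TSeq.Emb (d (js s)) (d (js t)) := liftT_emb_iff.1 hemb
    have h2 := liftT_emb_iff.2 h1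
    exact Emb_congr (hdlen _) (hdf _) (hdlen _) (hdf _) h2
  -- find a tail which is quasi-monotonic
  have hN : ∃ N, ∀ j, N ≤ j → ∃ m, j < m ∧ TSeq.Emb (τ j) (τ m) := by
    by_contra hcon
    push_neg at hcon
    choose J hJ1 hJ2 using hcon
    have hbad : ∀ s, ∃ N, badSeq J s = J N := by
      intro s; cases s with
      | zero => exact ⟨0, rfl⟩
      | succ s => exact ⟨badSeq J s + 1, rfl⟩
    have hstep : ∀ s, badSeq J s < badSeq J (s + 1) := fun s =>
      lt_of_lt_of_le (Nat.lt_succ_self _) (hJ1 (badSeq J s + 1))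
    obtain ⟨s, t, hst, hemb⟩ := hwqoτ (badSeq J)
    obtain ⟨N, hNe⟩ := hbad s
    have hlt : J N < badSeq J t := hNe ▸ strictMono_nat_of_lt_succ hstep hst
    exact hJ2 N (badSeq J t) hlt (hNe ▸ hemb)
  obtain ⟨N, hN⟩ := hN
  have hβNle : ∀ j, β N ≤ β (N + j) := fun j => hβm.monotone (Nat.le_add_right N j)
  have hβlen : ∀ j, β j ≤ σ.len := fun j => hsup ▸ Ordinal.le_iSup β j
  -- the tail concatenation
  set g : ℕ → Ordinal := fun j => β (N + j) - β N with hg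
  have hgval : ∀ j, β N + g j = β (N + j) := fun j =>
    Ordinal.add_sub_cancel_of_le (hβNle j)
  have htail : InH (σ.restr (β N) σ.len) := by
    refine InH.concat _ (fun j => τ (N + j)) (fun j => hH _) ?_ ?_
    · intro j
      obtain ⟨m, hm, hemb⟩ := hN (N + j) (Nat.le_add_right N j)
      have hNm : N ≤ m := le_of_lt (lt_of_le_of_lt (Nat.le_add_right N j) hm)
      refine ⟨m - N, by omega, ?_⟩
      have h2 : N + (m - N) = m := by omega
      show TSeq.Emb (τ (N + j)) (τ (N + (m - N)))
      rw [h2]; exact hemb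
    · refine ⟨g, ?_, ?_, ?_, ?_⟩
      · simp [hg, Ordinal.sub_self]
      · intro j
        show β (N + j + 1) - β N = (β (N + j) - β N) + (β (N + j + 1) - β (N + j))
        exact sub_add_sub' (hβNle j) (hβm.monotone (Nat.le_succ _))
      · show σ.len - β N = ⨆ j, g j
        apply le_antisymm
        · rw [Ordinal.sub_le, hsup]
          refine Ordinal.iSup_le_iff.2 fun j => ?_
          calc β j ≤ β (N + j) := hβm.monotone (Nat.le_add_left j N)
          _ = β N + g j := (hgval j).symm
          _ ≤ β N + ⨆ j, g j := add_le_add_right (Ordinal.le_iSup g j) _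
        · refine Ordinal.iSup_le_iff.2 fun j => ?_
          rw [Ordinal.sub_le, Ordinal.add_sub_cancel_of_le (hβlen N)]
          exact hβlen (N + j)
      · intro j γ hγ
        show σ.f (β N + (g j + γ)) = σ.f (β (N + j) + γ)
        rw [← add_assoc, hgval j]
  -- assemble the decomposition
  refine ⟨N + 1, fun i => if i ≤ N then β i else σ.len, by simp [hβ0], by simp, ?_, ?_⟩
  · intro i hi
    rcases Nat.lt_succ_iff_lt_or_eq.1 hi with h' | h'
    · simp only [if_pos (le_of_lt h'), if_pos (Nat.succ_le_of_lt h')]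
      exact hmono i
    · subst h'
      simp only [if_pos le_rfl, if_neg (by omega : ¬ i + 1 ≤ i)]
      exact lt_of_lt_of_le (hmono i) (hβlen (i + 1))
  · intro i hi
    rcases Nat.lt_succ_iff_lt_or_eq.1 hi with h' | h'
    · simp only [if_pos (le_of_lt h'), if_pos (Nat.succ_le_of_lt h')]
      exact hH i
    · subst h'
      simp only [if_pos le_rfl, if_neg (by omega : ¬ i + 1 ≤ i)]
      exact htail
def flatSt (n : ℕ → ℕ) : ℕ → ℕ × ℕ
  | 0 => (0, 0)
  | j + 1 =>
    if (flatSt n j).2 + 1 < n (flatSt n j).1 then ((flatSt n j).1, (flatSt n j).2 + 1)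
    else ((flatSt n j).1 + 1, 0)

noncomputable def lamSeq (v : ℕ → Ordinal) : ℕ → Ordinal
  | 0 => 0
  | k + 1 => max (lamSeq v k + 1) (v k)

/-- If `H` is wqo under embeddability, every countable transfinite `Q`-sequence
is a concatenation of finitely many elements of `H`: there are ordinals
`0 = α₀ < α₁ < ⋯ < αₙ = lh(σ)` with each `σ↾[αᵢ, αᵢ₊₁)` in `H`. -/
theorem stmt_15 {Q : Type} [Preorder Q]
    (hwqo : ∀ q : ℕ → TSeq Q, (∀ n, InH (q n)) →
      ∃ n m : ℕ, n < m ∧ TSeq.Emb (q n) (q m))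
    (σ : TSeq Q) (hcnt : σ.len.card ≤ Cardinal.aleph0) :
    ∃ (n : ℕ) (α : ℕ → Ordinal),
      α 0 = 0 ∧ α n = σ.len ∧ (∀ i, i < n → α i < α (i + 1)) ∧
      ∀ i, i < n → InH (σ.restr (α i) (α (i + 1))) := by
  suffices h : ∀ o : Ordinal, ∀ σ : TSeq Q, σ.len = o → o.card ≤ Cardinal.aleph0 →
      ∃ (n : ℕ) (α : ℕ → Ordinal),
        α 0 = 0 ∧ α n = σ.len ∧ (∀ i, i < n → α i < α (i + 1)) ∧
        ∀ i, i < n → InH (σ.restr (α i) (α (i + 1))) from h σ.len σ rfl hcnt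
  intro o
  induction o using Ordinal.induction with
  | _ o IH =>
  intro σ hlen hc
  rcases Ordinal.zero_or_succ_or_isSuccLimit o with h0 | ⟨a, ha⟩ | hlim
  · -- zero case
    exact ⟨0, fun _ => 0, rfl, by rw [hlen, h0], fun i hi => absurd hi (Nat.not_lt_zero i),
      fun i hi => absurd hi (Nat.not_lt_zero i)⟩
  · -- successor case
    have ha' : o = a + 1 := by rw [← ha, Ordinal.add_one_eq_succ]
    have halt : a < o := by rw [← ha]; exact Order.lt_succ a
    obtain ⟨n, α, h0', hend, hm, hh⟩ := IH a halt ⟨a, σ.f⟩ rfl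
      (le_trans (Ordinal.card_le_card halt.le) hc)
    have hend' : α n = a := hend
    refine ⟨n + 1, fun i => if i ≤ n then α i else o, by simp [h0'], by simp [hlen], ?_, ?_⟩
    · intro i hi
      rcases Nat.lt_succ_iff_lt_or_eq.1 hi with h' | h'
      · simp only [if_pos (le_of_lt h'), if_pos (Nat.succ_le_of_lt h')]
        exact hm i h'
      · subst h'
        simp only [if_pos le_rfl, if_neg (by omega : ¬ i + 1 ≤ i)]
        rw [hend']; exact halt
    · intro i hi
      rcases Nat.lt_succ_iff_lt_or_eq.1 hi with h' | h'
      · simp only [if_pos (le_of_lt h'), if_pos (Nat.succ_le_of_lt h')]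
        exact hh i h'
      · subst h'
        simp only [if_pos le_rfl, if_neg (by omega : ¬ i + 1 ≤ i)]
        refine InH.single _ ?_
        show o - α i = 1
        rw [hend', ha', Ordinal.add_sub_cancel]
  · -- limit case
    have hpos : 0 < o := hlim.pos
    have hcnt2 : Countable ↥(Set.Iio o) := by
      rw [← Cardinal.mk_le_aleph0_iff, Ordinal.mk_Iio_ordinal]
      calc Cardinal.lift o.card ≤ Cardinal.lift Cardinal.aleph0 := Cardinal.lift_le.2 hc
      _ = Cardinal.aleph0 := Cardinal.lift_aleph0
    have hne : Nonempty ↥(Set.Iio o) := ⟨⟨0, hpos⟩⟩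
    obtain ⟨e, he⟩ := exists_surjective_nat ↥(Set.Iio o)
    set lam : ℕ → Ordinal := lamSeq (fun k => (e k).1) with hlam
    have hlam0 : lam 0 = 0 := rfl
    have hlamlt : ∀ k, lam k < o := by
      intro k; induction k with
      | zero => exact hpos
      | succ k ih =>
        refine max_lt ?_ (e k).2
        rw [Ordinal.add_one_eq_succ]; exact hlim.succ_lt ih
    have hlamm : ∀ k, lam k < lam (k + 1) := fun k =>
      lt_of_lt_of_le (by rw [Ordinal.add_one_eq_succ]; exact Order.lt_succ _) (le_max_left _ _)
    have hlamsup : o = ⨆ k, lam k := by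
      apply le_antisymm
      · by_contra hno
        push_neg at hno
        obtain ⟨k, hk⟩ := he ⟨⨆ k, lam k, hno⟩
        have h1 : (⨆ k, lam k) ≤ (e k).1 := by rw [hk]
        have h2 : (e k).1 ≤ lam (k + 1) := le_max_right _ _
        have h3 : lam (k + 1) < lam (k + 2) := hlamm _
        have h4 : lam (k + 2) ≤ ⨆ k, lam k := Ordinal.le_iSup lam (k + 2)
        exact absurd (lt_of_le_of_lt (le_trans h1 h2) h3) (not_lt.2 h4)
      · exact Ordinal.iSup_le_iff.2 fun k => (hlamlt k).le
    have hblock : ∀ k, ∃ (n : ℕ) (α : ℕ → Ordinal),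
        α 0 = 0 ∧ α n = (σ.restr (lam k) (lam (k + 1))).len ∧
        (∀ i, i < n → α i < α (i + 1)) ∧
        ∀ i, i < n → InH ((σ.restr (lam k) (lam (k + 1))).restr (α i) (α (i + 1))) := by
      intro k
      have hsub : lam (k + 1) - lam k ≤ lam (k + 1) := Ordinal.sub_le_self _ _
      exact IH (lam (k + 1) - lam k) (lt_of_le_of_lt hsub (hlamlt (k + 1)))
        (σ.restr (lam k) (lam (k + 1))) rfl
        (le_trans (Ordinal.card_le_card (le_trans hsub (hlamlt (k + 1)).le)) hc)
    choose nk ak h0k hendk hmk hhk using hblock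
    have hendk' : ∀ k, ak k (nk k) = lam (k + 1) - lam k := hendk
    have hnkpos : ∀ k, 0 < nk k := by
      intro k
      by_contra h
      push_neg at h
      have h00 : nk k = 0 := Nat.le_zero.1 h
      have : (0 : Ordinal) = lam (k + 1) - lam k := by
        rw [← h0k k]; rw [← hendk' k, h00]
      have h2 : lam (k + 1) ≤ lam k := Ordinal.sub_eq_zero_iff_le.1 this.symm
      exact absurd h2 (not_le.2 (hlamm k))
    set st := flatSt nk with hst
    set kk : ℕ → ℕ := fun j => (st j).1 with hkk
    set ii : ℕ → ℕ := fun j => (st j).2 with hii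
    have hstep : ∀ j, st (j + 1) =
        if ii j + 1 < nk (kk j) then (kk j, ii j + 1) else (kk j + 1, 0) := fun j => rfl
    have hinv : ∀ j, ii j < nk (kk j) := by
      intro j; induction j with
      | zero => exact hnkpos 0
      | succ j ih =>
        by_cases hc' : ii j + 1 < nk (kk j)
        · have h1 : st (j + 1) = (kk j, ii j + 1) := by rw [hstep j, if_pos hc']
          show (st (j + 1)).2 < nk (st (j + 1)).1
          rw [h1]; exact hc'
        · have h1 : st (j + 1) = (kk j + 1, 0) := by rw [hstep j, if_neg hc']
          show (st (j + 1)).2 < nk (st (j + 1)).1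
          rw [h1]; exact hnkpos _
    set β : ℕ → Ordinal := fun j => lam (kk j) + ak (kk j) (ii j) with hβ
    have hβsucc : ∀ j, β (j + 1) = lam (kk j) + ak (kk j) (ii j + 1) := by
      intro j
      by_cases hc' : ii j + 1 < nk (kk j)
      · have h1 : st (j + 1) = (kk j, ii j + 1) := by rw [hstep j, if_pos hc']
        show lam (st (j + 1)).1 + ak (st (j + 1)).1 (st (j + 1)).2 = _
        rw [h1]
      · have heq : ii j + 1 = nk (kk j) := by have := hinv j; omega
        have h1 : st (j + 1) = (kk j + 1, 0) := by rw [hstep j, if_neg hc']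
        show lam (st (j + 1)).1 + ak (st (j + 1)).1 (st (j + 1)).2 = _
        rw [h1]
        show lam (kk j + 1) + ak (kk j + 1) 0 = _
        rw [h0k (kk j + 1), add_zero, heq, hendk' (kk j),
          Ordinal.add_sub_cancel_of_le (hlamm (kk j)).le]
    have hβ0 : β 0 = 0 := by
      show lam (st 0).1 + ak (st 0).1 (st 0).2 = 0
      show lam 0 + ak 0 0 = 0
      rw [hlam0, h0k 0, add_zero]
    have hβmono : ∀ j, β j < β (j + 1) := by
      intro j
      rw [hβsucc j]
      exact (add_lt_add_iff_left _).2 (hmk (kk j) (ii j) (hinv j))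
    have hβH : ∀ j, InH (σ.restr (β j) (β (j + 1))) := by
      intro j
      rw [hβsucc j]
      have hle : ak (kk j) (ii j) ≤ ak (kk j) (ii j + 1) := (hmk _ _ (hinv j)).le
      have h1 := hhk (kk j) (ii j) (hinv j)
      rwa [restr_restr σ (lam (kk j)) (lam (kk j + 1)) _ _ hle] at h1
    have hβlt : ∀ j, β j < o := by
      intro j
      have h1 : ak (kk j) (ii j) ≤ ak (kk j) (nk (kk j)) :=
        cut_mono (hmk (kk j)) _ _ (le_of_lt (hinv j)) le_rfl
      have h2 : β j ≤ lam (kk j + 1) := by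
        calc β j ≤ lam (kk j) + ak (kk j) (nk (kk j)) := add_le_add_right h1 _
        _ = lam (kk j + 1) := by
          rw [hendk' (kk j), Ordinal.add_sub_cancel_of_le (hlamm (kk j)).le]
      exact lt_of_le_of_lt h2 (hlamlt _)
    have hβsup : σ.len = ⨆ j, β j := by
      rw [hlen]
      apply le_antisymm
      · have hC : ∀ j, ∃ j', kk j' = kk j + 1 := by
          have main : ∀ d j, nk (kk j) - ii j ≤ d → ∃ j', kk j' = kk j + 1 := by
            intro d
            induction d with
            | zero => intro j hj; exact absurd hj (by have := hinv j; omega)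
            | succ d ihd =>
              intro j hj
              by_cases hc' : ii j + 1 < nk (kk j)
              · have h1 : st (j + 1) = (kk j, ii j + 1) := by rw [hstep j, if_pos hc']
                have hk1 : kk (j + 1) = kk j := by show (st (j+1)).1 = kk j; rw [h1]
                have hi1 : ii (j + 1) = ii j + 1 := by show (st (j+1)).2 = ii j + 1; rw [h1]
                obtain ⟨j', hj'⟩ := ihd (j + 1) (by rw [hk1, hi1]; omega)
                exact ⟨j', by rw [hj', hk1]⟩
              · have h1 : st (j + 1) = (kk j + 1, 0) := by rw [hstep j, if_neg hc']
                exact ⟨j + 1, by show (st (j+1)).1 = kk j + 1; rw [h1]⟩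
          intro j; exact main _ j le_rfl
        have hB : ∀ K, ∃ j, K ≤ kk j := by
          intro K
          induction K with
          | zero => exact ⟨0, Nat.zero_le _⟩
          | succ K ih =>
            obtain ⟨j, hj⟩ := ih
            obtain ⟨j', hj'⟩ := hC j
            exact ⟨j', by omega⟩
        rw [hlamsup]
        refine Ordinal.iSup_le_iff.2 fun K => ?_
        obtain ⟨j, hj⟩ := hB K
        calc lam K ≤ lam (kk j) := (strictMono_nat_of_lt_succ hlamm).monotone hj
        _ ≤ β j := le_self_add
        _ ≤ ⨆ j, β j := Ordinal.le_iSup β j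
      · exact Ordinal.iSup_le_iff.2 fun j => (hβlt j).le
    exact key_lemma hwqo σ (hlen ▸ hc) β hβ0 hβmono hβsup hβH
end
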